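/- arXiv:2502.05668 — 13 statements merged into one kernel-verified Lean document; each statement's English description precedes it below -/
import Mathlib

section
/- Under the late-stage training assumption, the sequence of norms is eventually strictly increasing and diverges: ‖w_{k+1}‖ > ‖w_k‖ for every k ≥ k₀, and ‖w_k‖ → +∞ as k → ∞. -/
open scoped RealInnerProductSpace

/-- Under the late-stage training assumption, the norms of the SGD iterates are
eventually strictly increasing and diverge to infinity. -/
theorem stmt_3 {d n L : ℕ} (hd : 0 < d) (hn : 0 < n) (hL : 0 < L)
    (p : Fin n → EuclideanSpace ℝ (Fin d) → ℝ)
    (hplip : ∀ i, LocallyLipschitz (p i))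
    (hphom : ∀ i, ∀ c : ℝ, 0 < c → ∀ w, p i (c • w) = c ^ L * p i w)
    (a : Fin n → EuclideanSpace ℝ (Fin d) → EuclideanSpace ℝ (Fin d))
    (haw : ∀ i w, ⟪a i w, w⟫ = (L : ℝ) * p i w)
    (hahom : ∀ i, ∀ c : ℝ, 0 < c → ∀ w, a i (c • w) = c ^ (L - 1) • a i w)
    (habd : ∀ i, ∃ M : ℝ, ∀ u : EuclideanSpace ℝ (Fin d), ‖u‖ = 1 → ‖a i u‖ ≤ M)
    (l : ℝ → ℝ) (hl : Differentiable ℝ l)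
    (hl' : ∀ q : ℝ, 0 ≤ q →
      (1 / 2) * Real.exp (-q) ≤ -deriv l q ∧ -deriv l q ≤ Real.exp (-q))
    (γ : ℝ) (hγ : 0 < γ)
    (B : ℕ → Finset (Fin n)) (hB : ∀ k, (B k).Nonempty)
    (w : ℕ → EuclideanSpace ℝ (Fin d))
    (hw : ∀ k, w (k + 1) =
      w k - (γ / (B k).card) • ∑ i ∈ B k, deriv l (p i (w k)) • a i (w k))
    (ε : ℝ) (hε : 0 < ε) (k₀ : ℕ)
    (hlate : ∀ k ≥ k₀, w k ≠ 0 ∧ ε ≤ ⨅ i, p i ((‖w k‖)⁻¹ • w k)) :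
    (∀ k ≥ k₀, ‖w k‖ < ‖w (k + 1)‖) ∧
      Filter.Tendsto (fun k => ‖w k‖) Filter.atTop Filter.atTop := by
  -- the inner-product expansion of one step
  have hip : ∀ k, ⟪w (k + 1), w k⟫ =
      ‖w k‖ ^ 2 + (γ / (B k).card) *
        ∑ i ∈ B k, (-(deriv l (p i (w k)))) * ((L : ℝ) * p i (w k)) := by
    intro k
    rw [hw k, inner_sub_left, real_inner_smul_left, sum_inner, real_inner_self_eq_norm_sq]
    simp_rw [real_inner_smul_left, haw, neg_mul]
    rw [Finset.sum_neg_distrib]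
    ring
  have hwpos : ∀ k ≥ k₀, 0 < ‖w k‖ := fun k hk => norm_pos_iff.mpr (hlate k hk).1
  -- decomposition of p i (w k) through the unit vector
  have hdec : ∀ k, k₀ ≤ k → ∀ i,
      p i (w k) = ‖w k‖ ^ L * p i ((‖w k‖)⁻¹ • w k) := by
    intro k hk i
    conv_lhs => rw [← smul_inv_smul₀ (hwpos k hk).ne' (w k)]
    exact hphom i _ (hwpos k hk) _
  have hε' : ∀ k, k₀ ≤ k → ∀ i, ε ≤ p i ((‖w k‖)⁻¹ • w k) := fun k hk i =>
    le_trans (hlate k hk).2 (ciInf_le (Finite.bddBelow_range _) i)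
  have hplow : ∀ k, k₀ ≤ k → ∀ i, ε * ‖w k‖ ^ L ≤ p i (w k) := by
    intro k hk i
    rw [hdec k hk i]
    have := hε' k hk i
    nlinarith [pow_pos (hwpos k hk) L]
  have hppos : ∀ k, k₀ ≤ k → ∀ i, 0 < p i (w k) := by
    intro k hk i
    exact lt_of_lt_of_le (mul_pos hε (pow_pos (hwpos k hk) L)) (hplow k hk i)
  -- -deriv l at nonneg points is positive
  have hderiv_pos : ∀ q : ℝ, 0 ≤ q → 0 < -deriv l q := fun q hq =>
    lt_of_lt_of_le (by positivity) (hl' q hq).1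
  -- cardinality positivity
  have hcard : ∀ k, (0 : ℝ) < (B k).card := fun k => by
    exact_mod_cast Finset.card_pos.mpr (hB k)
  -- strict increase
  have hstep : ∀ k ≥ k₀, ‖w k‖ < ‖w (k + 1)‖ := by
    intro k hk
    have hS : 0 < ∑ i ∈ B k, (-(deriv l (p i (w k)))) * ((L : ℝ) * p i (w k)) := by
      refine Finset.sum_pos (fun i _ => ?_) (hB k)
      exact mul_pos (hderiv_pos _ (hppos k hk i).le)
        (mul_pos (by exact_mod_cast hL) (hppos k hk i))
    have h1 : ‖w k‖ ^ 2 < ⟪w (k + 1), w k⟫ := by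
      rw [hip k]
      nlinarith [div_pos hγ (hcard k)]
    have h2 : ⟪w (k + 1), w k⟫ ≤ ‖w (k + 1)‖ * ‖w k‖ := real_inner_le_norm _ _
    have h3 : ‖w k‖ * ‖w k‖ < ‖w (k + 1)‖ * ‖w k‖ := by nlinarith
    exact lt_of_mul_lt_mul_right h3 (norm_nonneg _)
  -- monotonicity
  have hmono : ∀ j k, k₀ ≤ j → j ≤ k → ‖w j‖ ≤ ‖w k‖ := by
    intro j k hj hjk
    induction k, hjk using Nat.le_induction with
    | base => exact le_refl _
    | succ k hjk ih => exact ih.trans (hstep k (hj.trans hjk)).le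
  refine ⟨hstep, ?_⟩
  -- bound on p over the unit sphere
  have hC : ∃ C : ℝ, ∀ i, ∀ u : EuclideanSpace ℝ (Fin d), ‖u‖ = 1 → p i u ≤ C := by
    have h : ∀ i : Fin n, ∃ C, ∀ u ∈ Metric.sphere (0 : EuclideanSpace ℝ (Fin d)) 1,
        ‖p i u‖ ≤ C := fun i =>
      (isCompact_sphere 0 1).exists_bound_of_continuousOn (hplip i).continuous.continuousOn
    choose C hC' using h
    refine ⟨∑ i, max (C i) 0, fun i u hu => ?_⟩
    have h1 : p i u ≤ C i := by
      have := hC' i u (by simpa [mem_sphere_zero_iff_norm] using hu)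
      have := le_abs_self (p i u)
      rw [Real.norm_eq_abs] at *
      linarith
    have h2 : max (C i) 0 ≤ ∑ j, max (C j) 0 :=
      Finset.single_le_sum (f := fun j => max (C j) 0) (fun j _ => le_max_right _ _)
        (Finset.mem_univ i)
    exact h1.trans ((le_max_left _ _).trans h2)
  obtain ⟨C, hC⟩ := hC
  -- quantitative step while the norm is below M
  have hstepM : ∀ M : ℝ, 0 < M → ∃ c > 0, ∀ k, k₀ ≤ k → ‖w k‖ ≤ M →
      ‖w k‖ + c ≤ ‖w (k + 1)‖ := by
    intro M hM
    set r := ‖w k₀‖ with hr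
    have hrpos : 0 < r := hwpos k₀ le_rfl
    set δ := (1 / 2) * Real.exp (-(M ^ L * C)) with hδ
    have hδpos : 0 < δ := by positivity
    set t := δ * ((L : ℝ) * (ε * r ^ L)) with ht
    have htpos : 0 < t := by
      have : (0 : ℝ) < (L : ℝ) := by exact_mod_cast hL
      positivity
    refine ⟨γ * t / M, by positivity, fun k hk hkM => ?_⟩
    -- upper bound on p i (w k)
    have hub : ∀ i, p i (w k) ≤ M ^ L * C := by
      intro i
      rw [hdec k hk i]
      have h1 : ε ≤ p i ((‖w k‖)⁻¹ • w k) := hε' k hk i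
      have h2 : p i ((‖w k‖)⁻¹ • w k) ≤ C := by
        refine hC i _ ?_
        rw [norm_smul, norm_inv, norm_norm, inv_mul_cancel₀ (hwpos k hk).ne']
      have h3 : ‖w k‖ ^ L ≤ M ^ L := pow_le_pow_left₀ (norm_nonneg _) hkM L
      nlinarith [pow_pos (hwpos k hk) L]
    -- lower bound on each summand
    have hterm : ∀ i ∈ B k, t ≤ (-(deriv l (p i (w k)))) * ((L : ℝ) * p i (w k)) := by
      intro i _
      have hq := (hppos k hk i).le
      have hd1 : δ ≤ -deriv l (p i (w k)) := by
        refine le_trans ?_ (hl' _ hq).1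
        have : Real.exp (-(M ^ L * C)) ≤ Real.exp (-(p i (w k))) :=
          Real.exp_le_exp.mpr (by linarith [hub i])
        rw [hδ]; linarith
      have hq1 : (L : ℝ) * (ε * r ^ L) ≤ (L : ℝ) * p i (w k) := by
        have hLpos : (0 : ℝ) < (L : ℝ) := by exact_mod_cast hL
        have h1 : ε * r ^ L ≤ ε * ‖w k‖ ^ L := by
          have : r ^ L ≤ ‖w k‖ ^ L :=
            pow_le_pow_left₀ hrpos.le (hmono k₀ k le_rfl hk) L
          nlinarith
        have := hplow k hk i
        nlinarith
      have hLq : 0 < (L : ℝ) * (ε * r ^ L) := by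
        have : (0 : ℝ) < (L : ℝ) := by exact_mod_cast hL
        positivity
      calc t = δ * ((L : ℝ) * (ε * r ^ L)) := ht
        _ ≤ (-(deriv l (p i (w k)))) * ((L : ℝ) * p i (w k)) :=
          mul_le_mul hd1 hq1 hLq.le (le_trans hδpos.le hd1)
    -- sum lower bound
    have hsum : (B k).card * t ≤
        ∑ i ∈ B k, (-(deriv l (p i (w k)))) * ((L : ℝ) * p i (w k)) := by
      calc ((B k).card : ℝ) * t = ∑ _i ∈ B k, t := by
            rw [Finset.sum_const, nsmul_eq_mul]
        _ ≤ _ := Finset.sum_le_sum hterm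
    have hinner : ‖w k‖ ^ 2 + γ * t ≤ ⟪w (k + 1), w k⟫ := by
      rw [hip k]
      have h1 : γ * t ≤ (γ / (B k).card) *
          ∑ i ∈ B k, (-(deriv l (p i (w k)))) * ((L : ℝ) * p i (w k)) := by
        have h2 : (γ / (B k).card) * ((B k).card * t) = γ * t := by
          field_simp
        rw [← h2]
        exact mul_le_mul_of_nonneg_left hsum (by positivity)
      linarith
    have h2 : ⟪w (k + 1), w k⟫ ≤ ‖w (k + 1)‖ * ‖w k‖ := real_inner_le_norm _ _
    have h3 : (‖w k‖ + γ * t / M) * ‖w k‖ ≤ ‖w (k + 1)‖ * ‖w k‖ := by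
      have h4 : γ * t / M * ‖w k‖ ≤ γ * t := by
        rw [div_mul_eq_mul_div, div_le_iff₀ hM]
        exact mul_le_mul_of_nonneg_left hkM (mul_nonneg hγ.le htpos.le)
      have h5 : (‖w k‖ + γ * t / M) * ‖w k‖ = ‖w k‖ ^ 2 + γ * t / M * ‖w k‖ := by ring
      linarith
    exact le_of_mul_le_mul_right h3 (hwpos k hk)
  -- divergence
  rw [Filter.tendsto_atTop]
  intro b
  set M := max b (‖w k₀‖) + 1 with hMdef
  have hMpos : 0 < M := by
    have : 0 < ‖w k₀‖ := hwpos k₀ le_rfl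
    have := le_max_right b (‖w k₀‖)
    simp only [hMdef]
    linarith
  obtain ⟨c, hc, hstep'⟩ := hstepM M hMpos
  have hexists : ∃ K, k₀ ≤ K ∧ M < ‖w K‖ := by
    by_contra h
    push_neg at h
    have grow : ∀ j : ℕ, ‖w k₀‖ + j * c ≤ ‖w (k₀ + j)‖ := by
      intro j
      induction j with
      | zero => simp
      | succ j ih =>
        have hle : k₀ ≤ k₀ + j := Nat.le_add_right _ _
        have hbd : ‖w (k₀ + j)‖ ≤ M := h _ hle
        have := hstep' (k₀ + j) hle hbd
        have : ‖w (k₀ + j)‖ + c ≤ ‖w (k₀ + j + 1)‖ := this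
        push_cast
        have hj : (j : ℝ) * c + c = (j + 1) * c := by ring
        calc ‖w k₀‖ + ((j : ℝ) + 1) * c = (‖w k₀‖ + j * c) + c := by ring
          _ ≤ ‖w (k₀ + j)‖ + c := by linarith
          _ ≤ ‖w (k₀ + j + 1)‖ := this
        
    obtain ⟨j, hj⟩ := exists_nat_gt ((M - ‖w k₀‖) / c)
    have hjc : M - ‖w k₀‖ < j * c := by
      rw [div_lt_iff₀ hc] at hj
      linarith
    have h1 := grow j
    have h2 := h (k₀ + j) (Nat.le_add_right _ _)
    linarith
  obtain ⟨K, hK, hMK⟩ := hexists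
  refine Filter.eventually_atTop.2 ⟨K, fun k hk => ?_⟩
  have h1 : ‖w K‖ ≤ ‖w k‖ := hmono K k hK hk
  have h2 : b ≤ M := by
    have := le_max_left b (‖w k₀‖)
    simp only [hMdef]; linarith
  linarith
end

section
/- Under the late-stage training assumption, the norms of the iterates grow at least logarithmically: there exist a constant c₁ > 0 and an index k₁ ∈ ℕ such that ‖w_k‖^L ≥ c₁·log k for all k ≥ k₁. -/
open scoped RealInnerProductSpace

lemma aux_pow_sub_pow (m : ℕ) {x y : ℝ} (hy : 0 ≤ y) (hxy : y ≤ x) :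
    (m + 1 : ℝ) * y ^ m * (x - y) ≤ x ^ (m + 1) - y ^ (m + 1) := by
  induction m with
  | zero => simp
  | succ m ih =>
    have hx : 0 ≤ x := hy.trans hxy
    have hnn : 0 ≤ (m + 1 : ℝ) * y ^ m * (x - y) := by
      apply mul_nonneg (by positivity) (sub_nonneg.2 hxy)
    have h1 : x * ((m + 1 : ℝ) * y ^ m * (x - y)) ≤ x * (x ^ (m+1) - y ^ (m+1)) :=
      mul_le_mul_of_nonneg_left ih hx
    have h2 : y * ((m + 1 : ℝ) * y ^ m * (x - y)) ≤ x * ((m + 1 : ℝ) * y ^ m * (x - y)) :=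
      mul_le_mul_of_nonneg_right hxy hnn
    have hexp : x * (x ^ (m+1) - y ^ (m+1)) + (x - y) * y ^ (m+1) = x ^ (m+2) - y ^ (m+2) := by
      ring
    push_cast
    have heq : (m + 1 + 1 : ℝ) * y ^ (m + 1) * (x - y)
        = y * ((m + 1 : ℝ) * y ^ m * (x - y)) + (x - y) * y ^ (m + 1) := by ring
    linarith

set_option maxHeartbeats 2000000 in
/-- Under the late-stage training assumption, the iterate norms grow at least
logarithmically. -/
theorem stmt_4 {d n L : ℕ} (hd : 0 < d) (hn : 0 < n) (hL : 0 < L)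
    (p : Fin n → EuclideanSpace ℝ (Fin d) → ℝ)
    (hplip : ∀ i, LocallyLipschitz (p i))
    (hphom : ∀ i, ∀ c : ℝ, 0 < c → ∀ w, p i (c • w) = c ^ L * p i w)
    (a : Fin n → EuclideanSpace ℝ (Fin d) → EuclideanSpace ℝ (Fin d))
    (haw : ∀ i w, ⟪a i w, w⟫ = (L : ℝ) * p i w)
    (hahom : ∀ i, ∀ c : ℝ, 0 < c → ∀ w, a i (c • w) = c ^ (L - 1) • a i w)
    (habd : ∀ i, ∃ M : ℝ, ∀ u : EuclideanSpace ℝ (Fin d), ‖u‖ = 1 → ‖a i u‖ ≤ M)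
    (l : ℝ → ℝ) (hl : Differentiable ℝ l)
    (hl' : ∀ q : ℝ, 0 ≤ q →
      (1 / 2) * Real.exp (-q) ≤ -deriv l q ∧ -deriv l q ≤ Real.exp (-q))
    (γ : ℝ) (hγ : 0 < γ)
    (B : ℕ → Finset (Fin n)) (hB : ∀ k, (B k).Nonempty)
    (w : ℕ → EuclideanSpace ℝ (Fin d))
    (hw : ∀ k, w (k + 1) =
      w k - (γ / (B k).card) • ∑ i ∈ B k, deriv l (p i (w k)) • a i (w k))
    (ε : ℝ) (hε : 0 < ε) (k₀ : ℕ)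
    (hlate : ∀ k ≥ k₀, w k ≠ 0 ∧ ε ≤ ⨅ i, p i ((‖w k‖)⁻¹ • w k)) :
    ∃ c₁ : ℝ, 0 < c₁ ∧ ∃ k₁ : ℕ, ∀ k ≥ k₁, c₁ * Real.log k ≤ ‖w k‖ ^ L := by
  haveI : Nonempty (Fin n) := Fin.pos_iff_nonempty.mp hn
  -- positivity of norms in late stage
  have hpos : ∀ k ≥ k₀, 0 < ‖w k‖ := fun k hk => norm_pos_iff.mpr (hlate k hk).1
  -- margin lower bound for each i
  have hmarg : ∀ k ≥ k₀, ∀ i, ε ≤ p i ((‖w k‖)⁻¹ • w k) := by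
    intro k hk i
    exact (hlate k hk).2.trans (ciInf_le (Set.finite_range _).bddBelow i)
  -- unit vector fact
  have hunit : ∀ k ≥ k₀, ‖(‖w k‖)⁻¹ • w k‖ = 1 := by
    intro k hk
    rw [norm_smul, norm_inv, norm_norm, inv_mul_cancel₀ (hpos k hk).ne']
  -- bound on p on the unit sphere
  obtain ⟨Cb, hCb⟩ : ∃ Cb : ℝ, ∀ i, ∀ u : EuclideanSpace ℝ (Fin d), ‖u‖ = 1 → p i u ≤ Cb := by
    have h := fun i : Fin n => (isCompact_sphere (0 : EuclideanSpace ℝ (Fin d)) 1).exists_isMaxOn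
      ⟨(‖w k₀‖)⁻¹ • w k₀, by simpa [mem_sphere_zero_iff_norm] using hunit k₀ le_rfl⟩
      ((hplip i).continuous.continuousOn)
    choose u0 hu0 hmax using h
    refine ⟨Finset.univ.sup' Finset.univ_nonempty (fun i => p i (u0 i)), fun i u hu => ?_⟩
    exact (hmax i (by simpa [mem_sphere_zero_iff_norm] using hu)).trans
      (Finset.le_sup' _ (Finset.mem_univ i))
  -- bound on a on the unit sphere
  obtain ⟨M, hM1, hMa⟩ : ∃ M : ℝ, 1 ≤ M ∧
      ∀ i, ∀ u : EuclideanSpace ℝ (Fin d), ‖u‖ = 1 → ‖a i u‖ ≤ M := by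
    choose Mf hMf using habd
    refine ⟨max 1 (Finset.univ.sup' Finset.univ_nonempty Mf), le_max_left _ _, fun i u hu => ?_⟩
    exact (hMf i u hu).trans ((Finset.le_sup' _ (Finset.mem_univ i)).trans (le_max_right _ _))
  have hεC : ε ≤ Cb := (hmarg k₀ le_rfl ⟨0, hn⟩).trans (hCb _ _ (hunit k₀ le_rfl))
  have hCbpos : 0 < Cb := lt_of_lt_of_le hε hεC
  -- homogeneity along trajectory
  have hpdec : ∀ k ≥ k₀, ∀ i, p i (w k) = ‖w k‖ ^ L * p i ((‖w k‖)⁻¹ • w k) := by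
    intro k hk i
    have := hphom i ‖w k‖ (hpos k hk) ((‖w k‖)⁻¹ • w k)
    rwa [smul_inv_smul₀ (hpos k hk).ne'] at this
  have hp_lb : ∀ k ≥ k₀, ∀ i, ε * ‖w k‖ ^ L ≤ p i (w k) := by
    intro k hk i
    rw [hpdec k hk i, mul_comm]
    exact mul_le_mul_of_nonneg_left (hmarg k hk i) (by positivity)
  have hp_ub : ∀ k ≥ k₀, ∀ i, p i (w k) ≤ Cb * ‖w k‖ ^ L := by
    intro k hk i
    rw [hpdec k hk i, mul_comm]
    exact mul_le_mul_of_nonneg_right (hCb i _ (hunit k hk)) (by positivity)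
  have hp_nn : ∀ k ≥ k₀, ∀ i, 0 ≤ p i (w k) := by
    intro k hk i
    exact le_trans (by positivity) (hp_lb k hk i)
  have ha_ub : ∀ k ≥ k₀, ∀ i, ‖a i (w k)‖ ≤ M * ‖w k‖ ^ (L - 1) := by
    intro k hk i
    have h1 : a i (w k) = (‖w k‖) ^ (L-1) • a i ((‖w k‖)⁻¹ • w k) := by
      have := hahom i ‖w k‖ (hpos k hk) ((‖w k‖)⁻¹ • w k)
      rwa [smul_inv_smul₀ (hpos k hk).ne'] at this
    rw [h1, norm_smul, norm_pow, norm_norm, mul_comm]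
    exact mul_le_mul_of_nonneg_right (hMa i _ (hunit k hk)) (by positivity)
  -- the increment
  set g : ℕ → EuclideanSpace ℝ (Fin d) := fun k =>
    -((γ / (B k).card) • ∑ i ∈ B k, deriv l (p i (w k)) • a i (w k)) with hgdef
  have hwk : ∀ k, w (k + 1) = w k + g k := by
    intro k; rw [hw k, sub_eq_add_neg]
  have hcard : ∀ k, (0:ℝ) < (B k).card := fun k => by exact_mod_cast (hB k).card_pos
  -- inner product lower bound
  have hginner : ∀ k ≥ k₀,
      γ * ((1/2) * Real.exp (-(Cb * ‖w k‖ ^ L)) * ((L:ℝ) * (ε * ‖w k‖ ^ L)))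
        ≤ ⟪g k, w k⟫ := by
    intro k hk
    have hterm : ∀ i ∈ B k,
        (1/2) * Real.exp (-(Cb * ‖w k‖ ^ L)) * ((L:ℝ) * (ε * ‖w k‖ ^ L))
          ≤ (-(deriv l (p i (w k)))) * ((L:ℝ) * p i (w k)) := by
      intro i _
      have hq := hl' (p i (w k)) (hp_nn k hk i)
      have h1 : (1/2) * Real.exp (-(Cb * ‖w k‖ ^ L)) ≤ -(deriv l (p i (w k))) := by
        refine le_trans ?_ hq.1
        have h := hp_ub k hk i
        gcongr
      have h2 : (L:ℝ) * (ε * ‖w k‖ ^ L) ≤ (L:ℝ) * p i (w k) :=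
        mul_le_mul_of_nonneg_left (hp_lb k hk i) (Nat.cast_nonneg L)
      exact mul_le_mul h1 h2 (by positivity) (le_trans (by positivity) h1)
    have hcompute : ⟪g k, w k⟫
        = (γ / (B k).card) * ∑ i ∈ B k, (-(deriv l (p i (w k)))) * ((L:ℝ) * p i (w k)) := by
      simp only [hgdef, inner_neg_left, real_inner_smul_left, sum_inner, haw,
        neg_mul, Finset.sum_neg_distrib, mul_neg, neg_neg]
    rw [hcompute]
    have hsum := Finset.card_nsmul_le_sum (B k) _ _ hterm
    rw [nsmul_eq_mul] at hsum
    have h3 : (γ / (B k).card) * ((B k).card *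
        ((1/2) * Real.exp (-(Cb * ‖w k‖ ^ L)) * ((L:ℝ) * (ε * ‖w k‖ ^ L))))
        ≤ (γ / (B k).card) * ∑ i ∈ B k, (-(deriv l (p i (w k)))) * ((L:ℝ) * p i (w k)) := by
      exact mul_le_mul_of_nonneg_left hsum (div_pos hγ (hcard k)).le
    refine le_trans (le_of_eq ?_) h3
    field_simp
  -- norm upper bound on increment
  have hgnorm : ∀ k ≥ k₀,
      ‖g k‖ ≤ γ * (Real.exp (-(ε * ‖w k‖ ^ L)) * (M * ‖w k‖ ^ (L-1))) := by
    intro k hk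
    have hbound : ‖∑ i ∈ B k, deriv l (p i (w k)) • a i (w k)‖
        ≤ (B k).card • (Real.exp (-(ε * ‖w k‖ ^ L)) * (M * ‖w k‖ ^ (L-1))) := by
      refine (norm_sum_le _ _).trans (Finset.sum_le_card_nsmul _ _ _ ?_)
      intro i _
      rw [norm_smul]
      have hq := hl' _ (hp_nn k hk i)
      have habs : ‖deriv l (p i (w k))‖ ≤ Real.exp (-(ε * ‖w k‖ ^ L)) := by
        rw [Real.norm_eq_abs]
        have hneg : deriv l (p i (w k)) ≤ 0 := by
          nlinarith [hq.1, Real.exp_pos (-(p i (w k)))]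
        rw [abs_of_nonpos hneg]
        refine hq.2.trans ?_
        have := hp_lb k hk i
        gcongr
      exact mul_le_mul habs (ha_ub k hk i) (norm_nonneg _) (Real.exp_pos _).le
    have : ‖g k‖ = (γ / (B k).card) * ‖∑ i ∈ B k, deriv l (p i (w k)) • a i (w k)‖ := by
      rw [hgdef, norm_neg, norm_smul, Real.norm_eq_abs,
        abs_of_pos (div_pos hγ (hcard k))]
    rw [this]
    rw [nsmul_eq_mul] at hbound
    calc (γ / (B k).card) * ‖∑ i ∈ B k, deriv l (p i (w k)) • a i (w k)‖
        ≤ (γ / (B k).card) * ((B k).card *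
            (Real.exp (-(ε * ‖w k‖ ^ L)) * (M * ‖w k‖ ^ (L-1)))) := by
          exact mul_le_mul_of_nonneg_left hbound (le_of_lt (div_pos hγ (hcard k)))
      _ = γ * (Real.exp (-(ε * ‖w k‖ ^ L)) * (M * ‖w k‖ ^ (L-1))) := by
          rw [← mul_assoc, div_mul_cancel₀ _ (hcard k).ne']
  -- squared norm expansion
  have hnormsq : ∀ k, ‖w (k+1)‖^2 = ‖w k‖^2 + 2 * ⟪g k, w k⟫ + ‖g k‖^2 := by
    intro k
    rw [hwk k, norm_add_sq_real, real_inner_comm]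
  have hinn_nn : ∀ k ≥ k₀, 0 ≤ ⟪g k, w k⟫ := by
    intro k hk
    exact le_trans (by positivity) (hginner k hk)
  have hmono : ∀ k ≥ k₀, ‖w k‖ ≤ ‖w (k+1)‖ := by
    intro k hk
    have h1 : ‖w k‖^2 ≤ ‖w (k+1)‖^2 := by
      rw [hnormsq k]; nlinarith [hinn_nn k hk, sq_nonneg ‖g k‖]
    nlinarith [norm_nonneg (w k), norm_nonneg (w (k+1))]
  have hmono' : ∀ k₂ k₃, k₀ ≤ k₂ → k₂ ≤ k₃ → ‖w k₂‖ ≤ ‖w k₃‖ := by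
    intro k2 k3 h2 h23
    induction k3, h23 using Nat.le_induction with
    | base => exact le_rfl
    | succ k3 hk3 ih => exact ih.trans (hmono k3 (h2.trans hk3))
  have hLpos : (0:ℝ) < (L:ℝ) := by exact_mod_cast hL
  -- the norms are unbounded
  have hunbd : ∀ R : ℝ, ∃ K, k₀ ≤ K ∧ R ≤ ‖w K‖ := by
    intro R
    by_contra hcon
    push_neg at hcon
    have hcon' : ∀ K, k₀ ≤ K → ‖w K‖ < R := fun K hK => hcon K hK
    have hr0pos : 0 < ‖w k₀‖ := hpos k₀ le_rfl
    have hr0R : ‖w k₀‖ < R := hcon' k₀ le_rfl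
    have hRpos : 0 < R := hr0pos.trans hr0R
    set δ0 : ℝ :=
      2 * (γ * ((1/2) * Real.exp (-(Cb * R ^ L)) * ((L:ℝ) * (ε * ‖w k₀‖ ^ L)))) with hδ0
    have hδ0pos : 0 < δ0 := by positivity
    have hstep : ∀ k, k₀ ≤ k → ‖w k‖^2 + δ0 ≤ ‖w (k+1)‖^2 := by
      intro k hk
      have hlow : γ * ((1/2) * Real.exp (-(Cb * R ^ L)) * ((L:ℝ) * (ε * ‖w k₀‖ ^ L)))
          ≤ ⟪g k, w k⟫ := by
        refine le_trans ?_ (hginner k hk)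
        gcongr
        · exact (hcon' k hk).le
        · exact hmono' k₀ k le_rfl hk
      have h := hnormsq k
      nlinarith [sq_nonneg ‖g k‖]
    have hind : ∀ m : ℕ, ‖w k₀‖^2 + m * δ0 ≤ ‖w (k₀ + m)‖^2 := by
      intro m
      induction m with
      | zero => simp
      | succ m ih =>
        have h := hstep (k₀ + m) (Nat.le_add_right _ _)
        have hca : ((m+1 : ℕ) : ℝ) * δ0 = m * δ0 + δ0 := by push_cast; ring
        have hidx : k₀ + (m+1) = (k₀ + m) + 1 := rfl
        rw [hidx, hca]
        linarith
    obtain ⟨m, hm⟩ := exists_nat_ge (R^2 / δ0)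
    have hm' : R^2 ≤ m * δ0 := by
      rw [div_le_iff₀ hδ0pos] at hm; linarith
    have h1 := hind m
    have h2 := hcon' (k₀ + m) (Nat.le_add_right _ _)
    have h3 : ‖w (k₀ + m)‖^2 < R^2 :=
      pow_lt_pow_left₀ h2 (norm_nonneg _) two_ne_zero
    linarith [sq_nonneg ‖w k₀‖]
  -- a threshold beyond which the increment is at most the norm
  obtain ⟨R, hR1, hRbd⟩ : ∃ R : ℝ, 1 ≤ R ∧ ∀ x : ℝ, R ≤ x →
      γ * (Real.exp (-(ε * x ^ L)) * (M * x ^ (L-1))) ≤ x := by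
    have h1 : Filter.Tendsto (fun x : ℝ => ε * x) Filter.atTop Filter.atTop :=
      Filter.Tendsto.const_mul_atTop hε Filter.tendsto_id
    have h2 := (Real.tendsto_pow_mul_exp_neg_atTop_nhds_zero (L-1)).comp h1
    have htend : Filter.Tendsto
        (fun x : ℝ => (γ * M * (ε ^ (L-1))⁻¹) * ((ε * x) ^ (L-1) * Real.exp (-(ε * x))))
        Filter.atTop (nhds 0) := by
      have h3 := h2.const_mul (γ * M * (ε ^ (L-1))⁻¹)
      simpa [Function.comp] using h3
    have hev := htend.eventually (eventually_le_nhds (show (0:ℝ) < 1 by norm_num))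
    rw [Filter.eventually_atTop] at hev
    obtain ⟨R₀, hR₀⟩ := hev
    refine ⟨max R₀ 1, le_max_right _ _, fun x hx => ?_⟩
    have hx1 : (1:ℝ) ≤ x := le_trans (le_max_right _ _) hx
    have hxR₀ : R₀ ≤ x := le_trans (le_max_left _ _) hx
    have hkey := hR₀ x hxR₀
    have hrw : γ * M * (ε ^ (L-1))⁻¹ * ((ε * x) ^ (L-1) * Real.exp (-(ε * x)))
        = γ * (Real.exp (-(ε * x)) * (M * x ^ (L-1))) := by
      rw [mul_pow]
      field_simp
    have hxx : x ≤ x ^ L := le_self_pow₀ hx1 hL.ne'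
    have hexp : Real.exp (-(ε * x ^ L)) ≤ Real.exp (-(ε * x)) := by
      apply Real.exp_le_exp.mpr; nlinarith
    have hMnn : (0:ℝ) ≤ M := by linarith
    calc γ * (Real.exp (-(ε * x ^ L)) * (M * x ^ (L-1)))
        ≤ γ * (Real.exp (-(ε * x)) * (M * x ^ (L-1))) := by
          apply mul_le_mul_of_nonneg_left _ hγ.le
          apply mul_le_mul_of_nonneg_right hexp (by positivity)
      _ ≤ 1 := by rw [← hrw]; exact hkey
      _ ≤ x := hx1
  obtain ⟨K, hKk₀, hKR⟩ := hunbd R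
  have hRk : ∀ k, K ≤ k → R ≤ ‖w k‖ := fun k hk => hKR.trans (hmono' K k hKk₀ hk)
  set δ : ℝ := γ * (L:ℝ)^2 * ε * Cb / 3 with hδdef
  have hδpos : 0 < δ := by positivity
  -- one-step growth of the exponential potential
  have hφstep : ∀ k, K ≤ k →
      Real.exp (Cb * ‖w k‖ ^ L) + δ ≤ Real.exp (Cb * ‖w (k+1)‖ ^ L) := by
    intro k hk
    have hk₀' : k₀ ≤ k := hKk₀.trans hk
    have hρR : R ≤ ‖w k‖ := hRk k hk
    have hρ1 : (1:ℝ) ≤ ‖w k‖ := hR1.trans hρR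
    have hρpos : (0:ℝ) < ‖w k‖ := by linarith
    have hmk : ‖w k‖ ≤ ‖w (k+1)‖ := hmono k hk₀'
    have hg2 : ‖g k‖ ≤ ‖w k‖ := le_trans (hgnorm k hk₀') (hRbd _ hρR)
    have hstep2 : ‖w (k+1)‖ ≤ 2 * ‖w k‖ := by
      have h := norm_add_le (w k) (g k)
      rw [← hwk k] at h
      linarith
    have hstep1 : ‖w k‖^2 + γ * (L:ℝ) * ε * (‖w k‖ ^ L * Real.exp (-(Cb * ‖w k‖ ^ L)))
        ≤ ‖w (k+1)‖^2 := by
      have h := hnormsq k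
      have h2 := hginner k hk₀'
      nlinarith [sq_nonneg ‖g k‖]
    have hd1 : γ * (L:ℝ) * ε * (‖w k‖ ^ L * Real.exp (-(Cb * ‖w k‖ ^ L)))
        ≤ (‖w (k+1)‖ - ‖w k‖) * (3 * ‖w k‖) := by
      nlinarith [mul_nonneg (sub_nonneg.2 hmk)
        (show (0:ℝ) ≤ 3 * ‖w k‖ - (‖w (k+1)‖ + ‖w k‖) by linarith)]
    have hd2 : (L:ℝ) * ‖w k‖ ^ (L-1) * (‖w (k+1)‖ - ‖w k‖) ≤ ‖w (k+1)‖ ^ L - ‖w k‖ ^ L := by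
      have haux := aux_pow_sub_pow (L-1) (norm_nonneg (w k)) hmk
      have hc2 : (L-1) + 1 = L := Nat.sub_add_cancel hL
      rw [hc2] at haux
      have hc1 : ((L-1 : ℕ) : ℝ) + 1 = (L:ℝ) := by
        rw [Nat.cast_sub hL]; ring
      rw [hc1] at haux
      exact haux
    have m1 := mul_le_mul_of_nonneg_left hd1
      (show (0:ℝ) ≤ (L:ℝ) * ‖w k‖ ^ (L-1) by positivity)
    have m2 := mul_le_mul_of_nonneg_left hd2 (show (0:ℝ) ≤ 3 * ‖w k‖ by positivity)
    have m3 : ‖w k‖ ≤ ‖w k‖ ^ (L-1) * ‖w k‖ ^ L := by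
      rw [← pow_add]
      calc ‖w k‖ = ‖w k‖ ^ 1 := (pow_one _).symm
        _ ≤ ‖w k‖ ^ (L-1+L) := pow_le_pow_right₀ hρ1 (by omega)
    have m4 := mul_le_mul_of_nonneg_left m3
      (show (0:ℝ) ≤ γ * (L:ℝ)^2 * ε * Real.exp (-(Cb * ‖w k‖ ^ L)) by positivity)
    have h5 : γ * (L:ℝ)^2 * ε * Real.exp (-(Cb * ‖w k‖ ^ L)) * ‖w k‖
        ≤ 3 * ‖w k‖ * (‖w (k+1)‖ ^ L - ‖w k‖ ^ L) := by
      nlinarith [m1, m2, m4]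
    have hkey : (γ * (L:ℝ)^2 * ε / 3) * Real.exp (-(Cb * ‖w k‖ ^ L))
        ≤ ‖w (k+1)‖ ^ L - ‖w k‖ ^ L := by
      have h6 : γ * (L:ℝ)^2 * ε * Real.exp (-(Cb * ‖w k‖ ^ L))
          ≤ 3 * (‖w (k+1)‖ ^ L - ‖w k‖ ^ L) := by
        have := le_of_mul_le_mul_right
          (show (γ * (L:ℝ)^2 * ε * Real.exp (-(Cb * ‖w k‖ ^ L))) * ‖w k‖
            ≤ (3 * (‖w (k+1)‖ ^ L - ‖w k‖ ^ L)) * ‖w k‖ by nlinarith [h5]) hρpos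
        exact this
      linarith
    have ht : Cb * ‖w k‖ ^ L + Cb * ((γ * (L:ℝ)^2 * ε / 3) * Real.exp (-(Cb * ‖w k‖ ^ L)))
        ≤ Cb * ‖w (k+1)‖ ^ L := by
      nlinarith [mul_le_mul_of_nonneg_left hkey hCbpos.le]
    have hEE : Real.exp (Cb * ‖w k‖ ^ L) * Real.exp (-(Cb * ‖w k‖ ^ L)) = 1 := by
      rw [← Real.exp_add]; simp
    set u : ℝ := Cb * ((γ * (L:ℝ)^2 * ε / 3) * Real.exp (-(Cb * ‖w k‖ ^ L))) with hudef
    have h11 : Real.exp (Cb * ‖w k‖ ^ L) * u = δ := by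
      rw [hudef, hδdef]
      calc Real.exp (Cb * ‖w k‖ ^ L)
            * (Cb * ((γ * (L:ℝ)^2 * ε / 3) * Real.exp (-(Cb * ‖w k‖ ^ L))))
          = (γ * (L:ℝ)^2 * ε * Cb / 3)
            * (Real.exp (Cb * ‖w k‖ ^ L) * Real.exp (-(Cb * ‖w k‖ ^ L))) := by ring
        _ = γ * (L:ℝ)^2 * ε * Cb / 3 := by rw [hEE, mul_one]
    have h10 : Real.exp (Cb * ‖w k‖ ^ L) * (1 + u) = Real.exp (Cb * ‖w k‖ ^ L) + δ := by
      rw [mul_add, mul_one, h11]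
    have h7 : Real.exp (Cb * ‖w k‖ ^ L) * (1 + u) ≤ Real.exp (Cb * ‖w k‖ ^ L) * Real.exp u := by
      apply mul_le_mul_of_nonneg_left _ (Real.exp_pos _).le
      calc (1 + u) = u + 1 := by ring
        _ ≤ Real.exp u := Real.add_one_le_exp u
    have h9 : Real.exp (Cb * ‖w k‖ ^ L) * Real.exp u ≤ Real.exp (Cb * ‖w (k+1)‖ ^ L) := by
      rw [← Real.exp_add]
      exact Real.exp_le_exp.mpr ht
    linarith
  -- linear growth of the potential
  have hφind : ∀ m : ℕ, (m:ℝ) * δ ≤ Real.exp (Cb * ‖w (K + m)‖ ^ L) := by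
    intro m
    induction m with
    | zero => simpa using (Real.exp_pos (Cb * ‖w (K + 0)‖ ^ L)).le
    | succ m ih =>
      have h := hφstep (K + m) (Nat.le_add_right _ _)
      have hidx : K + (m+1) = (K + m) + 1 := rfl
      rw [hidx]
      push_cast
      linarith
  -- conclusion
  refine ⟨1/(2*Cb), by positivity, ?_⟩
  set A : ℝ := Real.log 2 - Real.log δ with hA
  refine ⟨max (2*K + 2) (⌈Real.exp (2*|A|)⌉₊ + 1), fun k hk => ?_⟩
  have hk1 : 2*K + 2 ≤ k := le_trans (le_max_left _ _) hk
  have hk2 : (⌈Real.exp (2*|A|)⌉₊ + 1 : ℕ) ≤ k := le_trans (le_max_right _ _) hk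
  have hKk : K ≤ k := by omega
  have hm := hφind (k - K)
  rw [Nat.add_sub_cancel' hKk] at hm
  have hmcast : ((k - K : ℕ) : ℝ) = (k:ℝ) - K := by
    rw [Nat.cast_sub hKk]
  rw [hmcast] at hm
  have hkK2 : (k:ℝ) ≤ 2*((k:ℝ) - (K:ℝ)) := by
    have h2K : (2*K : ℕ) ≤ k := by omega
    have := (Nat.cast_le (α := ℝ)).mpr h2K
    push_cast at this
    linarith
  have hmpos : (0:ℝ) < (k:ℝ) - (K:ℝ) := by
    have hKk' : K < k := by omega
    have := (Nat.cast_lt (α := ℝ)).mpr hKk'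
    linarith
  have hlog1 : Real.log (((k:ℝ) - K) * δ) ≤ Cb * ‖w k‖ ^ L :=
    (Real.log_le_iff_le_exp (by positivity)).mpr hm
  have hlog2 : Real.log (((k:ℝ) - K) * δ) = Real.log ((k:ℝ) - K) + Real.log δ :=
    Real.log_mul hmpos.ne' hδpos.ne'
  have hkpos : (0:ℝ) < (k:ℝ) := by
    have : 0 < k := by omega
    exact_mod_cast this
  have hlog3 : Real.log (k:ℝ) ≤ Real.log 2 + Real.log ((k:ℝ) - K) := by
    calc Real.log (k:ℝ) ≤ Real.log (2*((k:ℝ) - K)) := Real.log_le_log hkpos hkK2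
      _ = Real.log 2 + Real.log ((k:ℝ) - K) := Real.log_mul two_ne_zero hmpos.ne'
  have hklarge : 2*|A| ≤ Real.log (k:ℝ) := by
    have h1 : Real.exp (2*|A|) ≤ (k:ℝ) := by
      calc Real.exp (2*|A|) ≤ (⌈Real.exp (2*|A|)⌉₊ : ℝ) := Nat.le_ceil _
        _ ≤ (k:ℝ) := by
          have : (⌈Real.exp (2*|A|)⌉₊ : ℕ) ≤ k := by omega
          exact_mod_cast this
    calc 2*|A| = Real.log (Real.exp (2*|A|)) := (Real.log_exp _).symm
      _ ≤ Real.log (k:ℝ) := Real.log_le_log (Real.exp_pos _) h1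
  have hAabs : A ≤ |A| := le_abs_self A
  have habs_nn : (0:ℝ) ≤ |A| := abs_nonneg A
  have hfin : Real.log (k:ℝ) ≤ 2 * (Cb * ‖w k‖ ^ L) := by
    have hfa : Real.log (k:ℝ) - A ≤ Cb * ‖w k‖ ^ L := by
      rw [hA]; linarith
    linarith
  calc (1/(2*Cb)) * Real.log (k:ℝ)
      ≤ (1/(2*Cb)) * (2*(Cb * ‖w k‖ ^ L)) := by
        apply mul_le_mul_of_nonneg_left hfin (by positivity)
    _ = ‖w k‖ ^ L := by field_simp
end

section
/- Under the late-stage training assumption, the norms of the iterates grow at most logarithmically: there exist a constant c₂ > 0 and an index k₁ ∈ ℕ such that ‖w_k‖^L ≤ c₂·log k for all k ≥ k₁. -/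
/-!
Write `r_k = ‖w_k‖` and let `M` bound the `a_i` on the unit sphere. Once the normalized margin is
at least `ε`, homogeneity gives `p_i (w_k) ≥ ε r_k ^ L`, so every loss derivative in the batch is at
most `exp (-ε r_k ^ L)`, while `‖a_i (w_k)‖ ≤ M r_k ^ (L - 1)`; hence
`r_{k+1} ≤ r_k + |γ| M r_k ^ (L - 1) exp (-ε r_k ^ L)`. Along this recursion the potential
`exp (ε r ^ L / 2)` grows by at most a constant per step, because the factor `exp (-ε r ^ L)` absorbs
both the polynomial factors in `r' ^ L - r ^ L` and the potential itself. So
`exp (ε r_k ^ L / 2) = O(k) ≤ k ^ 2`, that is `r_k ^ L ≤ (4 / ε) log k`.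
-/

open Real Filter Finset
open scoped Nat RealInnerProductSpace

lemma exp_sub_exp_le_mul_exp (x y : ℝ) : exp y - exp x ≤ (y - x) * exp y := by
  have h := add_one_le_exp (x - y)
  have hxy : exp (x - y) * exp y = exp x := by rw [← exp_add, sub_add_cancel]
  nlinarith [exp_pos y]

lemma pow_mul_exp_neg_mul_le {x c : ℝ} (hx : 0 ≤ x) (hc : 0 < c) (n : ℕ) :
    x ^ n * exp (-(c * x)) ≤ n ! / c ^ n := by
  have h := pow_div_factorial_le_exp _ (mul_nonneg hc.le hx) n
  rw [mul_pow, div_le_iff₀ (by positivity)] at h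
  rw [le_div_iff₀ (by positivity), exp_neg]
  calc x ^ n * (exp (c * x))⁻¹ * c ^ n = c ^ n * x ^ n * (exp (c * x))⁻¹ := by ring
    _ ≤ exp (c * x) * n ! * (exp (c * x))⁻¹ := by gcongr
    _ = n ! := by field_simp

lemma eq_norm_pow_smul_apply_inv_norm_smul {E F : Type*} [NormedAddCommGroup E]
    [NormedSpace ℝ E] [AddCommGroup F] [Module ℝ F] {f : E → F} {N : ℕ}
    (hf : ∀ c : ℝ, 0 < c → ∀ w, f (c • w) = c ^ N • f w) {w : E} (hw : w ≠ 0) :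
    f w = ‖w‖ ^ N • f (‖w‖⁻¹ • w) := by
  conv_lhs => rw [← smul_inv_smul₀ (norm_ne_zero_iff.mpr hw) w]
  exact hf _ (norm_pos_iff.mpr hw) _

lemma norm_div_card_smul_sum_le {ι E : Type*} [SeminormedAddCommGroup E] [NormedSpace ℝ E]
    (γ : ℝ) (s : Finset ι) (v : ι → E) {X : ℝ} (hX : 0 ≤ X) (hv : ∀ i ∈ s, ‖v i‖ ≤ X) :
    ‖(γ / s.card) • ∑ i ∈ s, v i‖ ≤ |γ| * X := by
  rcases s.eq_empty_or_nonempty with rfl | hs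
  · simpa using mul_nonneg (abs_nonneg γ) hX
  have hcard : (0 : ℝ) < s.card := by exact_mod_cast hs.card_pos
  calc ‖(γ / s.card) • ∑ i ∈ s, v i‖ ≤ |γ| / s.card * (s.card * X) := by
        rw [norm_smul, Real.norm_eq_abs, abs_div, Nat.abs_cast]
        gcongr
        simpa using norm_sum_le_of_le s hv
    _ = |γ| * X := by field_simp

lemma norm_sub_batch_step_le {ι E : Type*} [NormedAddCommGroup E] [NormedSpace ℝ E]
    {p : ι → E → ℝ} {a : ι → E → E} {L : ℕ}
    (hphom : ∀ i, ∀ c : ℝ, 0 < c → ∀ w, p i (c • w) = c ^ L * p i w)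
    (hahom : ∀ i, ∀ c : ℝ, 0 < c → ∀ w, a i (c • w) = c ^ (L - 1) • a i w)
    {M : ℝ} (hM : 0 ≤ M) (ha : ∀ i u, ‖u‖ = 1 → ‖a i u‖ ≤ M)
    {g : ℝ → ℝ} (hg : ∀ q, 0 ≤ q → |g q| ≤ exp (-q))
    (γ : ℝ) (s : Finset ι) {ε : ℝ} (hε : 0 ≤ ε) {v : E} (hv : v ≠ 0)
    (hmargin : ∀ i, ε ≤ p i (‖v‖⁻¹ • v)) :
    ‖v - (γ / s.card) • ∑ i ∈ s, g (p i v) • a i v‖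
      ≤ ‖v‖ + |γ| * M * ‖v‖ ^ (L - 1) * exp (-(ε * ‖v‖ ^ L)) := by
  have hmargin_v : ∀ i, ε * ‖v‖ ^ L ≤ p i v := fun i => by
    rw [eq_norm_pow_smul_apply_inv_norm_smul (f := p i) (by simpa only [smul_eq_mul] using hphom i) hv,
      smul_eq_mul, mul_comm]
    gcongr
    exact hmargin i
  have hterm : ∀ i ∈ s, ‖g (p i v) • a i v‖ ≤ M * ‖v‖ ^ (L - 1) * exp (-(ε * ‖v‖ ^ L)) := by
    intro i _
    have hq : 0 ≤ p i v := (by positivity : 0 ≤ ε * ‖v‖ ^ L).trans (hmargin_v i)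
    rw [norm_smul, Real.norm_eq_abs, eq_norm_pow_smul_apply_inv_norm_smul (f := a i) (hahom i) hv,
      norm_smul, norm_pow, norm_norm]
    calc |g (p i v)| * (‖v‖ ^ (L - 1) * ‖a i (‖v‖⁻¹ • v)‖)
        ≤ exp (-(ε * ‖v‖ ^ L)) * (‖v‖ ^ (L - 1) * M) := by
          gcongr
          · exact (hg _ hq).trans (exp_le_exp.2 (neg_le_neg (hmargin_v i)))
          · exact ha i _ (norm_smul_inv_norm hv)
      _ = M * ‖v‖ ^ (L - 1) * exp (-(ε * ‖v‖ ^ L)) := by ring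
  calc ‖v - (γ / s.card) • ∑ i ∈ s, g (p i v) • a i v‖
      ≤ ‖v‖ + ‖(γ / s.card) • ∑ i ∈ s, g (p i v) • a i v‖ := norm_sub_le _ _
    _ ≤ ‖v‖ + |γ| * (M * ‖v‖ ^ (L - 1) * exp (-(ε * ‖v‖ ^ L))) := by
      gcongr
      exact norm_div_card_smul_sum_le γ s _ (by positivity) hterm
    _ = ‖v‖ + |γ| * M * ‖v‖ ^ (L - 1) * exp (-(ε * ‖v‖ ^ L)) := by ring

lemma le_mul_of_le_add_mul_exp_neg {L : ℕ} {ε K r r' : ℝ} (hε : 0 < ε) (hK : 0 ≤ K)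
    (hr : 1 ≤ r) (hstep : r' ≤ r + K * r ^ (L - 1) * exp (-(ε * r ^ L))) :
    r' ≤ (1 + K / ε) * r := calc
  r' ≤ r + K * (r ^ L * exp (-(ε * r ^ L))) := by
    refine hstep.trans ?_
    rw [← mul_assoc]
    gcongr
    exact Nat.sub_le L 1
  _ ≤ r + K * (1 / ε) := by
    gcongr
    simpa using pow_mul_exp_neg_mul_le (by positivity : 0 ≤ r ^ L) hε 1
  _ ≤ (1 + K / ε) * r := by
    rw [mul_one_div, add_mul, one_mul]
    linarith [le_mul_of_one_le_right (div_nonneg hK hε.le) hr]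

lemma pow_sub_pow_mul_exp_le {L : ℕ} {ε K r r' : ℝ} (hε : 0 < ε) (hK : 0 ≤ K) (hr : 1 ≤ r)
    (hrr' : r ≤ r') (hstep : r' ≤ r + K * r ^ (L - 1) * exp (-(ε * r ^ L))) :
    (r' ^ L - r ^ L) * exp (ε / 2 * r ^ L) ≤ L * K * (1 + K / ε) ^ (L - 1) * (8 / ε ^ 2) := by
  set x := r ^ L
  have hx : 0 ≤ x := by positivity
  have hr'0 : 0 ≤ r' := by linarith
  have hmean : r' ^ L - x ≤ (r' - r) * L * r' ^ (L - 1) := by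
    have h := (le_abs_self _).trans (abs_pow_sub_pow_le r' r L)
    rwa [abs_of_nonneg (sub_nonneg.2 hrr'), abs_of_nonneg hr'0, abs_of_nonneg (by linarith),
      max_eq_left hrr'] at h
  calc (r' ^ L - x) * exp (ε / 2 * x)
      ≤ (K * r ^ (L - 1) * exp (-(ε * x))) * L * ((1 + K / ε) * r) ^ (L - 1)
          * exp (ε / 2 * x) := by
        gcongr
        refine hmean.trans ?_
        gcongr
        · linarith
        · exact le_mul_of_le_add_mul_exp_neg hε hK hr hstep
    _ = L * K * (1 + K / ε) ^ (L - 1)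
          * (r ^ (L - 1) * r ^ (L - 1) * exp (-(ε / 2 * x))) := by
        rw [mul_pow, show -(ε * x) = -(ε / 2 * x) + -(ε / 2 * x) by ring, exp_add,
          exp_neg (ε / 2 * x)]
        field_simp
    _ ≤ L * K * (1 + K / ε) ^ (L - 1) * (x ^ 2 * exp (-(ε / 2 * x))) := by
        have hpow : r ^ (L - 1) ≤ x := pow_le_pow_right₀ hr (Nat.sub_le L 1)
        rw [sq]
        gcongr
    _ ≤ L * K * (1 + K / ε) ^ (L - 1) * (8 / ε ^ 2) := by
        gcongr
        calc x ^ 2 * exp (-(ε / 2 * x)) ≤ 2 ! / (ε / 2) ^ 2 :=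
              pow_mul_exp_neg_mul_le hx (half_pos hε) 2
          _ = 8 / ε ^ 2 := by
            rw [Nat.factorial_two]
            field_simp
            norm_num

lemma exists_exp_pow_step_le_of_one_le (L : ℕ) {ε K : ℝ} (hε : 0 < ε) (hK : 0 ≤ K) :
    ∃ C, ∀ r r' : ℝ, 1 ≤ r → r ≤ r' → r' ≤ r + K * r ^ (L - 1) * exp (-(ε * r ^ L)) →
      exp (ε / 2 * r' ^ L) ≤ exp (ε / 2 * r ^ L) + C := by
  set D := L * K * (1 + K / ε) ^ (L - 1) * (8 / ε ^ 2)
  refine ⟨ε / 2 * D * exp (ε / 2 * D), fun r r' hr hrr' hstep => ?_⟩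
  have hgap := pow_sub_pow_mul_exp_le hε hK hr hrr' hstep
  have hgap' : r' ^ L - r ^ L ≤ D :=
    (le_mul_of_one_le_right (sub_nonneg.2 (pow_le_pow_left₀ (by linarith) hrr' L))
      (one_le_exp (by positivity))).trans hgap
  have hsplit : exp (ε / 2 * r' ^ L) = exp (ε / 2 * r ^ L) * exp (ε / 2 * (r' ^ L - r ^ L)) := by
    rw [← exp_add]
    ring_nf
  calc exp (ε / 2 * r' ^ L)
      ≤ exp (ε / 2 * r ^ L) + (ε / 2 * r' ^ L - ε / 2 * r ^ L) * exp (ε / 2 * r' ^ L) := by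
        linarith [exp_sub_exp_le_mul_exp (ε / 2 * r ^ L) (ε / 2 * r' ^ L)]
    _ = exp (ε / 2 * r ^ L)
          + ε / 2 * ((r' ^ L - r ^ L) * exp (ε / 2 * r ^ L)) * exp (ε / 2 * (r' ^ L - r ^ L)) := by
        rw [hsplit]
        ring
    _ ≤ exp (ε / 2 * r ^ L) + ε / 2 * D * exp (ε / 2 * D) := by
        gcongr

lemma exists_exp_pow_step_le (L : ℕ) {ε K : ℝ} (hε : 0 < ε) (hK : 0 ≤ K) :
    ∃ C, ∀ r r' : ℝ, 0 ≤ r → 0 ≤ r' → r' ≤ r + K * r ^ (L - 1) * exp (-(ε * r ^ L)) →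
      exp (ε / 2 * r' ^ L) ≤ exp (ε / 2 * r ^ L) + C := by
  obtain ⟨C, hC⟩ := exists_exp_pow_step_le_of_one_le L hε hK
  refine ⟨max C 0 + exp (ε / 2 * (1 + K) ^ L), fun r r' hr hr' hstep => ?_⟩
  have hbounded := exp_pos (ε / 2 * (1 + K) ^ L)
  have hC0 := le_max_right C 0
  rcases le_total r' r with hr'r | hrr'
  · have : exp (ε / 2 * r' ^ L) ≤ exp (ε / 2 * r ^ L) := by gcongr
    linarith
  rcases le_total r 1 with hr1 | hr1
  · have hsmall : r' ≤ 1 + K := by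
      refine hstep.trans (add_le_add hr1 ?_)
      have hexp : exp (-(ε * r ^ L)) ≤ 1 := exp_le_one_iff.2 (by nlinarith [pow_nonneg hr L])
      calc K * r ^ (L - 1) * exp (-(ε * r ^ L)) ≤ K * 1 * 1 := by
            gcongr
            exact pow_le_one₀ hr hr1
        _ = K := by ring
    have : exp (ε / 2 * r' ^ L) ≤ exp (ε / 2 * (1 + K) ^ L) := by gcongr
    linarith [exp_pos (ε / 2 * r ^ L)]
  · linarith [hC r r' hr1 hrr' hstep, le_max_left C 0]

lemma eventually_le_two_mul_log_of_exp_succ_le {u : ℕ → ℝ} {C : ℝ} {k₀ : ℕ}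
    (h : ∀ k ≥ k₀, exp (u (k + 1)) ≤ exp (u k) + C) :
    ∀ᶠ k : ℕ in atTop, u k ≤ 2 * log k := by
  have hlin : ∀ k ≥ k₀, exp (u k) ≤ exp (u k₀) + C * (k - k₀) := by
    intro k hk
    induction k, hk using Nat.le_induction with
    | base => simp
    | succ k hk ih =>
      push_cast
      linarith [h k hk]
  filter_upwards [eventually_ge_atTop k₀, eventually_ge_atTop ⌈exp (u k₀) + |C| + 1⌉₊]
    with k hk hkC
  have hkC' : exp (u k₀) + |C| + 1 ≤ k := Nat.ceil_le.1 hkC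
  have hquad : exp (u k) ≤ (k : ℝ) ^ 2 := calc
    exp (u k) ≤ exp (u k₀) + C * (k - k₀) := hlin k hk
    _ ≤ exp (u k₀) + |C| * k := by
      have : C * (k - k₀) ≤ |C| * (k - k₀) := by
        gcongr
        · exact sub_nonneg.2 (by exact_mod_cast hk)
        · exact le_abs_self C
      nlinarith [abs_nonneg C]
    _ ≤ (k : ℝ) ^ 2 := by nlinarith [exp_pos (u k₀), abs_nonneg C]
  calc u k = log (exp (u k)) := (log_exp _).symm
    _ ≤ log ((k : ℝ) ^ 2) := log_le_log (exp_pos _) hquad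
    _ = 2 * log k := by rw [log_pow]; push_cast; ring

theorem stmt_5_general {d n L : ℕ}
    (p : Fin n → EuclideanSpace ℝ (Fin d) → ℝ)
    (hphom : ∀ i, ∀ c : ℝ, 0 < c → ∀ w, p i (c • w) = c ^ L * p i w)
    (a : Fin n → EuclideanSpace ℝ (Fin d) → EuclideanSpace ℝ (Fin d))
    (hahom : ∀ i, ∀ c : ℝ, 0 < c → ∀ w, a i (c • w) = c ^ (L - 1) • a i w)
    (habd : ∀ i, ∃ M : ℝ, ∀ u : EuclideanSpace ℝ (Fin d), ‖u‖ = 1 → ‖a i u‖ ≤ M)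
    (l : ℝ → ℝ)
    (hl' : ∀ q : ℝ, 0 ≤ q →
      (1 / 2) * Real.exp (-q) ≤ -deriv l q ∧ -deriv l q ≤ Real.exp (-q))
    (γ : ℝ)
    (B : ℕ → Finset (Fin n))
    (w : ℕ → EuclideanSpace ℝ (Fin d))
    (hw : ∀ k, w (k + 1) =
      w k - (γ / (B k).card) • ∑ i ∈ B k, deriv l (p i (w k)) • a i (w k))
    (ε : ℝ) (hε : 0 < ε) (k₀ : ℕ)
    (hlate : ∀ k ≥ k₀, w k ≠ 0 ∧ ε ≤ ⨅ i, p i ((‖w k‖)⁻¹ • w k)) :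
    ∃ c₂ : ℝ, 0 < c₂ ∧ ∃ k₁ : ℕ, ∀ k ≥ k₁, ‖w k‖ ^ L ≤ c₂ * Real.log k := by
  choose Mb hMb using habd
  obtain ⟨M, hM0, hM⟩ : ∃ M, 0 ≤ M ∧ ∀ i u, ‖u‖ = 1 → ‖a i u‖ ≤ M :=
    ⟨∑ j, |Mb j|, by positivity, fun i u hu => (hMb i u hu).trans ((le_abs_self _).trans
      (single_le_sum (fun j _ => abs_nonneg (Mb j)) (mem_univ i)))⟩
  have hderiv : ∀ q, 0 ≤ q → |deriv l q| ≤ exp (-q) := fun q hq =>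
    abs_le.2 ⟨by linarith [(hl' q hq).2], by linarith [(hl' q hq).1, exp_pos (-q)]⟩
  have hstep : ∀ k ≥ k₀, ‖w (k + 1)‖
      ≤ ‖w k‖ + |γ| * M * ‖w k‖ ^ (L - 1) * exp (-(ε * ‖w k‖ ^ L)) := by
    intro k hk
    obtain ⟨hwk, hmargin⟩ := hlate k hk
    rw [hw k]
    exact norm_sub_batch_step_le hphom hahom hM0 hM hderiv γ (B k) hε.le hwk
      fun i => hmargin.trans (ciInf_le (Finite.bddBelow_range _) i)
  obtain ⟨C, hC⟩ := exists_exp_pow_step_le L hε (K := |γ| * M) (by positivity)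
  obtain ⟨k₁, hk₁⟩ := eventually_atTop.1 <|
    eventually_le_two_mul_log_of_exp_succ_le (u := fun k => ε / 2 * ‖w k‖ ^ L) fun k hk =>
      hC _ _ (norm_nonneg _) (norm_nonneg _) (hstep k hk)
  refine ⟨4 / ε, by positivity, k₁, fun k hk => ?_⟩
  have hlog := hk₁ k hk
  rw [div_mul_eq_mul_div, le_div_iff₀ hε]
  linarith

/-- Under the late-stage training assumption, the iterate norms grow at most
logarithmically. -/
theorem stmt_5 {d n L : ℕ} (hd : 0 < d) (hn : 0 < n) (hL : 0 < L)
    (p : Fin n → EuclideanSpace ℝ (Fin d) → ℝ)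
    (hplip : ∀ i, LocallyLipschitz (p i))
    (hphom : ∀ i, ∀ c : ℝ, 0 < c → ∀ w, p i (c • w) = c ^ L * p i w)
    (a : Fin n → EuclideanSpace ℝ (Fin d) → EuclideanSpace ℝ (Fin d))
    (haw : ∀ i w, ⟪a i w, w⟫ = (L : ℝ) * p i w)
    (hahom : ∀ i, ∀ c : ℝ, 0 < c → ∀ w, a i (c • w) = c ^ (L - 1) • a i w)
    (habd : ∀ i, ∃ M : ℝ, ∀ u : EuclideanSpace ℝ (Fin d), ‖u‖ = 1 → ‖a i u‖ ≤ M)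
    (l : ℝ → ℝ) (hl : Differentiable ℝ l)
    (hl' : ∀ q : ℝ, 0 ≤ q →
      (1 / 2) * Real.exp (-q) ≤ -deriv l q ∧ -deriv l q ≤ Real.exp (-q))
    (γ : ℝ) (hγ : 0 < γ)
    (B : ℕ → Finset (Fin n)) (hB : ∀ k, (B k).Nonempty)
    (w : ℕ → EuclideanSpace ℝ (Fin d))
    (hw : ∀ k, w (k + 1) =
      w k - (γ / (B k).card) • ∑ i ∈ B k, deriv l (p i (w k)) • a i (w k))
    (ε : ℝ) (hε : 0 < ε) (k₀ : ℕ)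
    (hlate : ∀ k ≥ k₀, w k ≠ 0 ∧ ε ≤ ⨅ i, p i ((‖w k‖)⁻¹ • w k)) :
    ∃ c₂ : ℝ, 0 < c₂ ∧ ∃ k₁ : ℕ, ∀ k ≥ k₁, ‖w k‖ ^ L ≤ c₂ * Real.log k :=
  stmt_5_general p hphom a hahom habd l hl' γ B w hw ε hε k₀ hlate
end

section
/- Assume additionally that 0 < l(q) ≤ e^{−q} for all q ≥ 0 and define the empirical risk ℒ(w) := (1/n)·Σ_{i=1}^n l(p_i(w)). Under the late-stage training assumption, the empirical risk decays polynomially: there exist a constant c > 0 and an index k₁ ∈ ℕ such that 0 < ℒ(w_k) ≤ k^{−c} for all k ≥ k₁; in particular ℒ(w_k) → 0. -/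
open scoped RealInnerProductSpace

private lemma exp_sub_exp_ge' (a b : ℝ) : Real.exp a * (b - a) ≤ Real.exp b - Real.exp a := by
  have h := Real.add_one_le_exp (b - a)
  have key : Real.exp a * Real.exp (b - a) = Real.exp b := by
    rw [← Real.exp_add]; ring_nf
  nlinarith [Real.exp_pos a]

set_option maxHeartbeats 2000000 in
/-- Under the late-stage training assumption, the empirical risk decays
polynomially and hence converges to zero. -/
theorem stmt_6 {d n L : ℕ} (hd : 0 < d) (hn : 0 < n) (hL : 0 < L)
    (p : Fin n → EuclideanSpace ℝ (Fin d) → ℝ)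
    (hplip : ∀ i, LocallyLipschitz (p i))
    (hphom : ∀ i, ∀ c : ℝ, 0 < c → ∀ w, p i (c • w) = c ^ L * p i w)
    (a : Fin n → EuclideanSpace ℝ (Fin d) → EuclideanSpace ℝ (Fin d))
    (haw : ∀ i w, ⟪a i w, w⟫ = (L : ℝ) * p i w)
    (hahom : ∀ i, ∀ c : ℝ, 0 < c → ∀ w, a i (c • w) = c ^ (L - 1) • a i w)
    (habd : ∀ i, ∃ M : ℝ, ∀ u : EuclideanSpace ℝ (Fin d), ‖u‖ = 1 → ‖a i u‖ ≤ M)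
    (l : ℝ → ℝ) (hl : Differentiable ℝ l)
    (hl' : ∀ q : ℝ, 0 ≤ q →
      (1 / 2) * Real.exp (-q) ≤ -deriv l q ∧ -deriv l q ≤ Real.exp (-q))
    (γ : ℝ) (hγ : 0 < γ)
    (B : ℕ → Finset (Fin n)) (hB : ∀ k, (B k).Nonempty)
    (w : ℕ → EuclideanSpace ℝ (Fin d))
    (hw : ∀ k, w (k + 1) =
      w k - (γ / (B k).card) • ∑ i ∈ B k, deriv l (p i (w k)) • a i (w k))
    (ε : ℝ) (hε : 0 < ε) (k₀ : ℕ)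
    (hlate : ∀ k ≥ k₀, w k ≠ 0 ∧ ε ≤ ⨅ i, p i ((‖w k‖)⁻¹ • w k))
    (hlpos : ∀ q : ℝ, 0 ≤ q → 0 < l q ∧ l q ≤ Real.exp (-q)) :
    (∃ c : ℝ, 0 < c ∧ ∃ k₁ : ℕ, ∀ k ≥ k₁,
      0 < (1 / n : ℝ) * ∑ i, l (p i (w k)) ∧
        (1 / n : ℝ) * ∑ i, l (p i (w k)) ≤ (k : ℝ) ^ (-c)) ∧
      Filter.Tendsto (fun k => (1 / n : ℝ) * ∑ i, l (p i (w k)))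
        Filter.atTop (nhds 0) := by
  haveI hne : Nonempty (Fin n) := Fin.pos_iff_nonempty.mp hn
  have hLpos : (0:ℝ) < L := by exact_mod_cast hL
  choose Ma hMa using habd
  set M : ℝ := max ((L:ℝ) * ε) (Finset.univ.sup' Finset.univ_nonempty Ma) with hMdef
  have hM0 : 0 < M := lt_of_lt_of_le (mul_pos hLpos hε) (le_max_left _ _)
  have hMa' : ∀ i (u : EuclideanSpace ℝ (Fin d)), ‖u‖ = 1 → ‖a i u‖ ≤ M := fun i u hu =>
    (hMa i u hu).trans ((Finset.le_sup' Ma (Finset.mem_univ i)).trans (le_max_right _ _))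
  -- basic bounds on p i (w k) for k ≥ k₀
  have facts : ∀ k, k₀ ≤ k → 0 < ‖w k‖ ∧
      ∀ i, ε * ‖w k‖ ^ L ≤ p i (w k) ∧ p i (w k) ≤ M / L * ‖w k‖ ^ L := by
    intro k hk
    obtain ⟨hwne, hinf⟩ := hlate k hk
    have hx : 0 < ‖w k‖ := norm_pos_iff.mpr hwne
    refine ⟨hx, fun i => ?_⟩
    have hu : ‖(‖w k‖)⁻¹ • w k‖ = 1 := norm_smul_inv_norm hwne
    have hpu1 : ε ≤ p i ((‖w k‖)⁻¹ • w k) :=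
      hinf.trans (ciInf_le (Finite.bddBelow_range _) i)
    have hau : ‖a i ((‖w k‖)⁻¹ • w k)‖ ≤ M := hMa' i _ hu
    have hpu2 : p i ((‖w k‖)⁻¹ • w k) ≤ M / L := by
      have h1 : (L:ℝ) * p i ((‖w k‖)⁻¹ • w k) = ⟪a i ((‖w k‖)⁻¹ • w k), (‖w k‖)⁻¹ • w k⟫ :=
        (haw i _).symm
      have h2 : ⟪a i ((‖w k‖)⁻¹ • w k), (‖w k‖)⁻¹ • w k⟫ ≤
          ‖a i ((‖w k‖)⁻¹ • w k)‖ * ‖(‖w k‖)⁻¹ • w k‖ := real_inner_le_norm _ _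
      rw [hu, mul_one] at h2
      rw [le_div_iff₀ hLpos]
      nlinarith
    have hscale : p i (w k) = ‖w k‖ ^ L * p i ((‖w k‖)⁻¹ • w k) := by
      have h := hphom i (‖w k‖) hx ((‖w k‖)⁻¹ • w k)
      rwa [smul_inv_smul₀ hx.ne'] at h
    have hXL : (0:ℝ) < ‖w k‖ ^ L := pow_pos hx L
    constructor
    · rw [hscale]
      calc ε * ‖w k‖ ^ L = ‖w k‖ ^ L * ε := mul_comm _ _
        _ ≤ ‖w k‖ ^ L * p i ((‖w k‖)⁻¹ • w k) := mul_le_mul_of_nonneg_left hpu1 hXL.le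
    · rw [hscale]
      calc ‖w k‖ ^ L * p i ((‖w k‖)⁻¹ • w k) ≤ ‖w k‖ ^ L * (M / L) :=
            mul_le_mul_of_nonneg_left hpu2 hXL.le
        _ = M / L * ‖w k‖ ^ L := mul_comm _ _
  -- one-step norm growth
  have step : ∀ k, k₀ ≤ k →
      ‖w k‖ + γ * ((L:ℝ) * ε / 2) *
        (‖w k‖ ^ (L-1) * Real.exp (-(M / L * ‖w k‖ ^ L))) ≤ ‖w (k+1)‖ := by
    intro k hk
    obtain ⟨hx, hb⟩ := facts k hk
    set E := Real.exp (-(M / L * ‖w k‖ ^ L)) with hE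
    have hE0 : 0 < E := Real.exp_pos _
    have hcard : (0:ℝ) < (B k).card := by exact_mod_cast Finset.card_pos.mpr (hB k)
    have hip : ⟪w (k+1), w k⟫ = ‖w k‖^2 -
        (γ / (B k).card) * ∑ i ∈ B k, deriv l (p i (w k)) * ((L:ℝ) * p i (w k)) := by
      rw [hw k, inner_sub_left, real_inner_smul_left, sum_inner]
      simp only [real_inner_smul_left, haw]
      rw [real_inner_self_eq_norm_sq]
    have hsum : ∑ i ∈ B k, deriv l (p i (w k)) * ((L:ℝ) * p i (w k)) ≤
        (B k).card * (-((L:ℝ) * ε / 2 * (‖w k‖ ^ L * E))) := by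
      have hterm : ∀ i ∈ B k, deriv l (p i (w k)) * ((L:ℝ) * p i (w k)) ≤
          -((L:ℝ) * ε / 2 * (‖w k‖ ^ L * E)) := by
        intro i _
        obtain ⟨hlo, hhi⟩ := hb i
        have hp0 : 0 ≤ p i (w k) := le_trans (by positivity) hlo
        obtain ⟨hd1, hd2⟩ := hl' _ hp0
        have hdl : deriv l (p i (w k)) ≤ -(1/2 * Real.exp (-(p i (w k)))) := by linarith
        have hq : (0:ℝ) ≤ (L:ℝ) * p i (w k) := by positivity
        have hmul : deriv l (p i (w k)) * ((L:ℝ) * p i (w k)) ≤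
            -(1/2 * Real.exp (-(p i (w k)))) * ((L:ℝ) * p i (w k)) :=
          mul_le_mul_of_nonneg_right hdl hq
        have hEq : E ≤ Real.exp (-(p i (w k))) := Real.exp_le_exp.mpr (by linarith)
        have h3 : ε * ‖w k‖ ^ L * E ≤ p i (w k) * Real.exp (-(p i (w k))) :=
          mul_le_mul hlo hEq hE0.le hp0
        have h4 := mul_le_mul_of_nonneg_left h3 (le_of_lt (by positivity : (0:ℝ) < (L:ℝ)/2))
        nlinarith
      calc ∑ i ∈ B k, deriv l (p i (w k)) * ((L:ℝ) * p i (w k))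
          ≤ ∑ _i ∈ B k, (-((L:ℝ) * ε / 2 * (‖w k‖ ^ L * E))) := Finset.sum_le_sum hterm
        _ = (B k).card * (-((L:ℝ) * ε / 2 * (‖w k‖ ^ L * E))) := by
            rw [Finset.sum_const, nsmul_eq_mul]
    have hip_ge : ‖w k‖^2 + γ * ((L:ℝ) * ε / 2) * (‖w k‖ ^ L * E) ≤ ⟪w (k+1), w k⟫ := by
      rw [hip]
      have h5 := mul_le_mul_of_nonneg_left hsum
        (le_of_lt (div_pos hγ hcard))
      have h6 : (γ / (B k).card) * ((B k).card * (-((L:ℝ) * ε / 2 * (‖w k‖ ^ L * E)))) =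
          -(γ * ((L:ℝ) * ε / 2) * (‖w k‖ ^ L * E)) := by
        field_simp
      linarith
    have hipn : ⟪w (k+1), w k⟫ ≤ ‖w (k+1)‖ * ‖w k‖ := real_inner_le_norm _ _
    have hXL : ‖w k‖ ^ (L-1) * ‖w k‖ = ‖w k‖ ^ L := by
      rw [← pow_succ, Nat.sub_add_cancel hL]
    have hfin : (‖w k‖ + γ * ((L:ℝ) * ε / 2) * (‖w k‖ ^ (L-1) * E)) * ‖w k‖ ≤
        ‖w (k+1)‖ * ‖w k‖ := by
      calc (‖w k‖ + γ * ((L:ℝ) * ε / 2) * (‖w k‖ ^ (L-1) * E)) * ‖w k‖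
          = ‖w k‖^2 + γ * ((L:ℝ) * ε / 2) * (‖w k‖ ^ (L-1) * ‖w k‖ * E) := by ring
        _ = ‖w k‖^2 + γ * ((L:ℝ) * ε / 2) * (‖w k‖ ^ L * E) := by rw [hXL]
        _ ≤ ⟪w (k+1), w k⟫ := hip_ge
        _ ≤ ‖w (k+1)‖ * ‖w k‖ := hipn
    exact le_of_mul_le_mul_right hfin hx
  -- monotonicity
  have mono_succ : ∀ k, k₀ ≤ k → ‖w k‖ ≤ ‖w (k+1)‖ := by
    intro k hk
    have h := step k hk
    have hterm : 0 ≤ γ * ((L:ℝ) * ε / 2) *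
        (‖w k‖ ^ (L-1) * Real.exp (-(M / L * ‖w k‖ ^ L))) := by positivity
    linarith
  have mono : ∀ k, k₀ ≤ k → ‖w k₀‖ ≤ ‖w k‖ := by
    intro k hk
    induction k, hk using Nat.le_induction with
    | base => exact le_rfl
    | succ k hk ih => exact ih.trans (mono_succ k hk)
  have hm0 : 0 < ‖w k₀‖ := (facts k₀ le_rfl).1
  set A : ℝ := γ * ((L:ℝ) * ε / 2) with hA_def
  have hA : 0 < A := mul_pos hγ (div_pos (mul_pos hLpos hε) two_pos)
  set δ : ℝ := M / L * (A * (‖w k₀‖ ^ (L-1) * ‖w k₀‖ ^ (L-1))) with hδ_def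
  have hδ : 0 < δ := mul_pos (div_pos hM0 hLpos)
    (mul_pos hA (mul_pos (pow_pos hm0 _) (pow_pos hm0 _)))
  -- z step
  have zstep : ∀ k, k₀ ≤ k →
      Real.exp (M / L * ‖w k‖ ^ L) + δ ≤ Real.exp (M / L * ‖w (k+1)‖ ^ L) := by
    intro k hk
    have hx := (facts k hk).1
    have hmle : ‖w k₀‖ ≤ ‖w k‖ := mono k hk
    have hs := step k hk
    have hmono := mono_succ k hk
    set E := Real.exp (-(M / L * ‖w k‖ ^ L)) with hE
    have hE0 : 0 < E := Real.exp_pos _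
    -- y difference lower bound
    have h4 : ‖w k₀‖ ^ (L-1) ≤ ‖w k‖ ^ (L-1) := pow_le_pow_left₀ hm0.le hmle _
    have hy : ‖w k₀‖ ^ (L-1) * (A * (‖w k₀‖ ^ (L-1) * E)) ≤
        ‖w (k+1)‖ ^ L - ‖w k‖ ^ L := by
      have h2 : ‖w k‖ ^ (L-1) * ‖w (k+1)‖ ≤ ‖w (k+1)‖ ^ (L-1) * ‖w (k+1)‖ :=
        mul_le_mul_of_nonneg_right (pow_le_pow_left₀ hx.le hmono _) (norm_nonneg _)
      have e1 : ‖w (k+1)‖ ^ (L-1) * ‖w (k+1)‖ = ‖w (k+1)‖ ^ L := by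
        rw [← pow_succ, Nat.sub_add_cancel hL]
      have e2 : ‖w k‖ ^ (L-1) * ‖w k‖ = ‖w k‖ ^ L := by
        rw [← pow_succ, Nat.sub_add_cancel hL]
      have h1 : ‖w k‖ ^ (L-1) * (‖w (k+1)‖ - ‖w k‖) ≤ ‖w (k+1)‖ ^ L - ‖w k‖ ^ L := by
        nlinarith
      have h3 : A * (‖w k‖ ^ (L-1) * E) ≤ ‖w (k+1)‖ - ‖w k‖ := by linarith
      have h5 : ‖w k₀‖ ^ (L-1) * (A * (‖w k₀‖ ^ (L-1) * E)) ≤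
          ‖w k‖ ^ (L-1) * (A * (‖w k‖ ^ (L-1) * E)) := by
        have hp0 : (0:ℝ) ≤ ‖w k₀‖ ^ (L-1) := by positivity
        have hin : A * (‖w k₀‖ ^ (L-1) * E) ≤ A * (‖w k‖ ^ (L-1) * E) :=
          mul_le_mul_of_nonneg_left (mul_le_mul_of_nonneg_right h4 hE0.le) hA.le
        have hin0 : (0:ℝ) ≤ A * (‖w k₀‖ ^ (L-1) * E) := by
          have : (0:ℝ) ≤ ‖w k₀‖ ^ (L-1) * E := mul_nonneg hp0 hE0.le
          exact mul_nonneg hA.le this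
        exact mul_le_mul h4 hin hin0 (by positivity)
      have h6 : ‖w k‖ ^ (L-1) * (A * (‖w k‖ ^ (L-1) * E)) ≤
          ‖w k‖ ^ (L-1) * (‖w (k+1)‖ - ‖w k‖) :=
        mul_le_mul_of_nonneg_left h3 (by positivity)
      linarith
    -- exponentiate
    have hexp := exp_sub_exp_ge' (M / L * ‖w k‖ ^ L) (M / L * ‖w (k+1)‖ ^ L)
    have hdiff : M / L * (‖w k₀‖ ^ (L-1) * (A * (‖w k₀‖ ^ (L-1) * E))) ≤
        M / L * ‖w (k+1)‖ ^ L - M / L * ‖w k‖ ^ L := by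
      have := mul_le_mul_of_nonneg_left hy (le_of_lt (div_pos hM0 hLpos))
      linarith [this]
    have hmul : Real.exp (M / L * ‖w k‖ ^ L) *
        (M / L * (‖w k₀‖ ^ (L-1) * (A * (‖w k₀‖ ^ (L-1) * E)))) ≤
        Real.exp (M / L * ‖w k‖ ^ L) *
        (M / L * ‖w (k+1)‖ ^ L - M / L * ‖w k‖ ^ L) :=
      mul_le_mul_of_nonneg_left hdiff (Real.exp_pos _).le
    have hprod : Real.exp (M / L * ‖w k‖ ^ L) * E = 1 := by
      rw [hE, ← Real.exp_add]
      ring_nf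
      exact Real.exp_zero
    have heq : Real.exp (M / L * ‖w k‖ ^ L) *
        (M / L * (‖w k₀‖ ^ (L-1) * (A * (‖w k₀‖ ^ (L-1) * E)))) = δ := by
      rw [hδ_def]
      linear_combination (M / L * (‖w k₀‖ ^ (L-1) * (A * ‖w k₀‖ ^ (L-1)))) * hprod
    linarith
  -- z lower bound
  have zlower : ∀ k, k₀ ≤ k → δ * ((k:ℝ) - (k₀:ℝ)) ≤ Real.exp (M / L * ‖w k‖ ^ L) := by
    intro k hk
    induction k, hk using Nat.le_induction with
    | base =>
      rw [sub_self, mul_zero]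
      exact (Real.exp_pos _).le
    | succ k hk ih =>
      have hz := zstep k hk
      push_cast
      push_cast at ih
      linarith
  -- risk bounds
  have hnR : (0:ℝ) < n := by exact_mod_cast hn
  have riskpos : ∀ k, k₀ ≤ k → 0 < (1 / n : ℝ) * ∑ i, l (p i (w k)) := by
    intro k hk
    obtain ⟨hx, hb⟩ := facts k hk
    have hpos : ∀ i : Fin n, 0 < l (p i (w k)) := fun i =>
      (hlpos _ (le_trans (by positivity) (hb i).1)).1
    have hs : 0 < ∑ i, l (p i (w k)) :=
      Finset.sum_pos (fun i _ => hpos i) Finset.univ_nonempty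
    have h1n : (0:ℝ) < 1 / n := by positivity
    exact mul_pos h1n hs
  have riskle : ∀ k, k₀ ≤ k →
      (1 / n : ℝ) * ∑ i, l (p i (w k)) ≤ Real.exp (-(ε * ‖w k‖ ^ L)) := by
    intro k hk
    obtain ⟨hx, hb⟩ := facts k hk
    have h1 : ∀ i : Fin n, l (p i (w k)) ≤ Real.exp (-(ε * ‖w k‖ ^ L)) := by
      intro i
      have hp0 : 0 ≤ p i (w k) := le_trans (by positivity) (hb i).1
      exact ((hlpos _ hp0).2).trans (Real.exp_le_exp.mpr (by linarith [(hb i).1]))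
    have h2 : ∑ i, l (p i (w k)) ≤ (n:ℝ) * Real.exp (-(ε * ‖w k‖ ^ L)) := by
      calc ∑ i, l (p i (w k)) ≤ ∑ _i : Fin n, Real.exp (-(ε * ‖w k‖ ^ L)) :=
            Finset.sum_le_sum (fun i _ => h1 i)
        _ = (n:ℝ) * Real.exp (-(ε * ‖w k‖ ^ L)) := by
            rw [Finset.sum_const, Finset.card_univ, Fintype.card_fin, nsmul_eq_mul]
    calc (1 / n : ℝ) * ∑ i, l (p i (w k)) ≤
        (1 / n : ℝ) * ((n:ℝ) * Real.exp (-(ε * ‖w k‖ ^ L))) :=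
          mul_le_mul_of_nonneg_left h2 (by positivity)
      _ = Real.exp (-(ε * ‖w k‖ ^ L)) := by field_simp
  -- final constants
  set c : ℝ := ε * L / (2 * M) with hc_def
  have hc : 0 < c := div_pos (mul_pos hε hLpos) (by linarith)
  set k₁ : ℕ := max (max k₀ (2 * k₀)) (⌈(2/δ)^2⌉₊ + 1) with hk₁_def
  have main : ∀ k ≥ k₁, 0 < (1 / n : ℝ) * ∑ i, l (p i (w k)) ∧
      (1 / n : ℝ) * ∑ i, l (p i (w k)) ≤ (k : ℝ) ^ (-c) := by
    intro k hk
    have hk0 : k₀ ≤ k := le_trans ((le_max_left k₀ (2*k₀)).trans (le_max_left _ _)) hk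
    have hk2 : 2 * k₀ ≤ k := le_trans ((le_max_right k₀ (2*k₀)).trans (le_max_left _ _)) hk
    have hkceil : ⌈(2/δ)^2⌉₊ + 1 ≤ k := le_trans (le_max_right _ _) hk
    have hk1 : 1 ≤ k := le_trans (Nat.le_add_left 1 _) hkceil
    have hkpos : (0:ℝ) < k := by exact_mod_cast hk1
    have hkc : (2/δ)^2 ≤ (k:ℝ) := by
      have h1 : ((⌈(2/δ)^2⌉₊ : ℝ)) ≤ k := by exact_mod_cast le_trans (Nat.le_succ _) hkceil
      exact (Nat.le_ceil _).trans h1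
    refine ⟨riskpos k hk0, ?_⟩
    have hz := zlower k hk0
    have hhalf : (k:ℝ)/2 ≤ (k:ℝ) - k₀ := by
      have h2 : ((2*k₀ : ℕ):ℝ) ≤ k := by exact_mod_cast hk2
      push_cast at h2
      linarith
    have hsq : Real.sqrt k ≤ Real.exp (M / L * ‖w k‖ ^ L) := by
      have h2δ : 2/δ ≤ Real.sqrt k := by
        have h := Real.sqrt_le_sqrt hkc
        rwa [Real.sqrt_sq (div_nonneg (by norm_num) hδ.le)] at h
      have h2' : 2 ≤ Real.sqrt k * δ := (div_le_iff₀ hδ).mp h2δ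
      have hsk : Real.sqrt k * Real.sqrt k = (k:ℝ) := Real.mul_self_sqrt hkpos.le
      have h3 := mul_le_mul_of_nonneg_right h2' (Real.sqrt_nonneg (k:ℝ))
      have hδk : δ * (Real.sqrt (k:ℝ) * Real.sqrt (k:ℝ)) = δ * (k:ℝ) := by rw [hsk]
      have h4 : δ * ((k:ℝ) - k₀) ≤ Real.exp (M / L * ‖w k‖ ^ L) := hz
      have h5 : δ * ((k:ℝ)/2) ≤ δ * ((k:ℝ) - k₀) :=
        mul_le_mul_of_nonneg_left hhalf hδ.le
      nlinarith [h3, hδk, h4, h5]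
    -- raise to power 2c
    have h2c : (0:ℝ) ≤ 2 * c := by linarith
    have hr := Real.rpow_le_rpow (Real.sqrt_nonneg ((k:ℕ):ℝ)) hsq h2c
    have hlhs : Real.sqrt ((k:ℕ):ℝ) ^ (2*c : ℝ) = (k:ℝ) ^ (c : ℝ) := by
      rw [Real.sqrt_eq_rpow, ← Real.rpow_mul hkpos.le]
      congr 1
      ring
    have hrhs : Real.exp (M / L * ‖w k‖ ^ L) ^ (2*c : ℝ) = Real.exp (ε * ‖w k‖ ^ L) := by
      rw [Real.rpow_def_of_pos (Real.exp_pos _), Real.log_exp]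
      congr 1
      rw [hc_def]
      field_simp
    rw [hlhs, hrhs] at hr
    have hfin : Real.exp (-(ε * ‖w k‖ ^ L)) ≤ (k:ℝ) ^ (-c : ℝ) := by
      rw [Real.exp_neg, Real.rpow_neg hkpos.le]
      exact inv_anti₀ (Real.rpow_pos_of_pos hkpos c) hr
    exact (riskle k hk0).trans hfin
  refine ⟨⟨c, hc, k₁, main⟩, ?_⟩
  apply squeeze_zero' (Filter.eventually_atTop.mpr ⟨k₁, fun k hk => (main k hk).1.le⟩)
    (Filter.eventually_atTop.mpr ⟨k₁, fun k hk => (main k hk).2⟩)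
  exact (tendsto_rpow_neg_atTop hc).comp tendsto_natCast_atTop_atTop
end

section
/- Under the late-stage training assumption, there exist constants C > 0 and M > 0 such that for every k ≥ k₀, ‖w_{k+1}‖² ≥ ‖w_k‖²·(1 + C·γ·e^{−M·‖w_k‖^L}·‖w_k‖^{L−2}). -/
/-!
Since the margin of the normalised iterate is at least `ε` and every `p i` is bounded by some `M`
on the unit sphere, homogeneity pins each `p i (w k)` between `ε ‖w k‖ ^ L` and `M ‖w k‖ ^ L`.
By Euler's identity `⟪a i w, w⟫ = L p i w`, the update direction then has inner product with `w k`
at least `γ L ε ‖w k‖ ^ L e^{-M ‖w k‖ ^ L} / 2`, and expanding `‖w k - step‖²` while dropping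
`‖step‖² ≥ 0` gives the claim with `C = L ε`.
-/

open scoped RealInnerProductSpace

open Finset

theorem exists_pos_bound_on_unit_sphere {ι E : Type*} [Finite ι] [NormedAddCommGroup E]
    [NormedSpace ℝ E] [ProperSpace E] (p : ι → E → ℝ) (hp : ∀ i, Continuous (p i)) :
    ∃ M : ℝ, 0 < M ∧ ∀ i u, ‖u‖ = 1 → p i u ≤ M := by
  have hbdd (i : ι) : BddAbove (p i '' Metric.sphere 0 1) :=
    (isCompact_sphere 0 1).bddAbove_image (hp i).continuousOn
  choose P hP using hbdd
  obtain ⟨M, hM⟩ := Finite.bddAbove_range P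
  refine ⟨max 1 M, by positivity, fun i u hu => ?_⟩
  calc p i u ≤ P i := hP i ⟨u, by simpa using hu, rfl⟩
    _ ≤ M := hM ⟨i, rfl⟩
    _ ≤ max 1 M := le_max_right _ _

theorem eq_norm_pow_mul_of_homogeneous {E : Type*} [NormedAddCommGroup E] [NormedSpace ℝ E]
    {f : E → ℝ} {L : ℕ} (hf : ∀ c : ℝ, 0 < c → ∀ w, f (c • w) = c ^ L * f w) {w : E}
    (hw : w ≠ 0) : f w = ‖w‖ ^ L * f (‖w‖⁻¹ • w) := by
  rw [← hf _ (norm_pos_iff.2 hw), smul_inv_smul₀ (norm_ne_zero_iff.2 hw)]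

theorem mem_Icc_of_homogeneous {E : Type*} [NormedAddCommGroup E] [NormedSpace ℝ E]
    {f : E → ℝ} {L : ℕ} (hf : ∀ c : ℝ, 0 < c → ∀ w, f (c • w) = c ^ L * f w) {w : E}
    (hw : w ≠ 0) {ε M : ℝ} (hε : ε ≤ f (‖w‖⁻¹ • w)) (hM : f (‖w‖⁻¹ • w) ≤ M) :
    f w ∈ Set.Icc (ε * ‖w‖ ^ L) (M * ‖w‖ ^ L) := by
  rw [eq_norm_pow_mul_of_homogeneous hf hw, mul_comm ε, mul_comm M]
  constructor <;> gcongr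

theorem half_exp_neg_mul_le_mul {x q a b : ℝ} (ha : 0 ≤ a) (haq : a ≤ q) (hqb : q ≤ b)
    (hx : 1 / 2 * Real.exp (-q) ≤ x) : 1 / 2 * Real.exp (-b) * a ≤ x * q :=
  calc 1 / 2 * Real.exp (-b) * a ≤ 1 / 2 * Real.exp (-q) * q := by gcongr
    _ ≤ x * q := by gcongr; linarith

theorem norm_sq_add_le_norm_sub_batch_avg_sq {ι E : Type*} [NormedAddCommGroup E]
    [InnerProductSpace ℝ E] {B : Finset ι} (hB : B.Nonempty) (v : ι → E) (w : E) {γ K : ℝ}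
    (hγ : 0 ≤ γ) (hv : ∀ i ∈ B, K ≤ -⟪v i, w⟫) :
    ‖w‖ ^ 2 + 2 * γ * K ≤ ‖w - (γ / #B) • ∑ i ∈ B, v i‖ ^ 2 := by
  have hcard : (0 : ℝ) < #B := by exact_mod_cast hB.card_pos
  have hsum : (#B : ℝ) * K ≤ -∑ i ∈ B, ⟪w, v i⟫ := by
    simpa only [real_inner_comm, Finset.sum_neg_distrib, nsmul_eq_mul] using
      Finset.card_nsmul_le_sum B _ K hv
  have hinner : ⟪w, (γ / #B) • ∑ i ∈ B, v i⟫ ≤ -(γ * K) := by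
    rw [real_inner_smul_right, inner_sum]
    calc γ / #B * ∑ i ∈ B, ⟪w, v i⟫ ≤ γ / #B * -(#B * K) := by gcongr; linarith
      _ = -(γ * K) := by field_simp
  rw [norm_sub_sq_real]
  nlinarith [sq_nonneg ‖(γ / #B) • ∑ i ∈ B, v i‖]

theorem stmt_7_general {d n L : ℕ} (hL : 0 < L)
    (p : Fin n → EuclideanSpace ℝ (Fin d) → ℝ)
    (hplip : ∀ i, LocallyLipschitz (p i))
    (hphom : ∀ i, ∀ c : ℝ, 0 < c → ∀ w, p i (c • w) = c ^ L * p i w)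
    (a : Fin n → EuclideanSpace ℝ (Fin d) → EuclideanSpace ℝ (Fin d))
    (haw : ∀ i w, ⟪a i w, w⟫ = (L : ℝ) * p i w)
    (l : ℝ → ℝ)
    (hl' : ∀ q : ℝ, 0 ≤ q →
      (1 / 2) * Real.exp (-q) ≤ -deriv l q ∧ -deriv l q ≤ Real.exp (-q))
    (γ : ℝ) (hγ : 0 < γ)
    (B : ℕ → Finset (Fin n)) (hB : ∀ k, (B k).Nonempty)
    (w : ℕ → EuclideanSpace ℝ (Fin d))
    (hw : ∀ k, w (k + 1) =
      w k - (γ / (B k).card) • ∑ i ∈ B k, deriv l (p i (w k)) • a i (w k))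
    (ε : ℝ) (hε : 0 < ε) (k₀ : ℕ)
    (hlate : ∀ k ≥ k₀, w k ≠ 0 ∧ ε ≤ ⨅ i, p i ((‖w k‖)⁻¹ • w k)) :
    ∃ C : ℝ, 0 < C ∧ ∃ M : ℝ, 0 < M ∧ ∀ k ≥ k₀,
      ‖w k‖ ^ 2 * (1 + C * γ * Real.exp (-M * ‖w k‖ ^ L) * ‖w k‖ ^ ((L : ℤ) - 2)) ≤
        ‖w (k + 1)‖ ^ 2 := by
  obtain ⟨M, hM, hpM⟩ := exists_pos_bound_on_unit_sphere p fun i => (hplip i).continuous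
  refine ⟨L * ε, by positivity, M, hM, fun k hk => ?_⟩
  obtain ⟨hwk, hεk⟩ := hlate k hk
  set R := ‖w k‖
  have hR : 0 < R := norm_pos_iff.2 hwk
  have hterm : ∀ i ∈ B k, L * (1 / 2 * Real.exp (-(M * R ^ L)) * (ε * R ^ L)) ≤
      -⟪deriv l (p i (w k)) • a i (w k), w k⟫ := by
    intro i _
    obtain ⟨hlo, hhi⟩ := mem_Icc_of_homogeneous (hphom i) hwk
      (hεk.trans (ciInf_le (Set.finite_range _).bddBelow i))
      (hpM i _ (by simpa using norm_smul_inv_norm (𝕜 := ℝ) hwk))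
    have hderiv := (hl' _ ((mul_pos hε (pow_pos hR L)).le.trans hlo)).1
    rw [real_inner_smul_left, haw]
    linear_combination (L : ℝ) * half_exp_neg_mul_le_mul (by positivity) hlo hhi hderiv
  have hzpow : R ^ 2 * R ^ ((L : ℤ) - 2) = R ^ L := by
    rw [← zpow_natCast, ← zpow_natCast, ← zpow_add₀ hR.ne']
    congr 1
    ring
  rw [hw k, neg_mul]
  refine (Eq.le ?_).trans (norm_sq_add_le_norm_sub_batch_avg_sq (hB k) _ _ hγ.le hterm)
  linear_combination (L * ε * γ * Real.exp (-(M * R ^ L))) * hzpow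

/-- Lower estimate on the growth of the squared norm of the iterates. -/
theorem stmt_7 {d n L : ℕ} (hd : 0 < d) (hn : 0 < n) (hL : 0 < L)
    (p : Fin n → EuclideanSpace ℝ (Fin d) → ℝ)
    (hplip : ∀ i, LocallyLipschitz (p i))
    (hphom : ∀ i, ∀ c : ℝ, 0 < c → ∀ w, p i (c • w) = c ^ L * p i w)
    (a : Fin n → EuclideanSpace ℝ (Fin d) → EuclideanSpace ℝ (Fin d))
    (haw : ∀ i w, ⟪a i w, w⟫ = (L : ℝ) * p i w)
    (hahom : ∀ i, ∀ c : ℝ, 0 < c → ∀ w, a i (c • w) = c ^ (L - 1) • a i w)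
    (habd : ∀ i, ∃ M : ℝ, ∀ u : EuclideanSpace ℝ (Fin d), ‖u‖ = 1 → ‖a i u‖ ≤ M)
    (l : ℝ → ℝ) (hl : Differentiable ℝ l)
    (hl' : ∀ q : ℝ, 0 ≤ q →
      (1 / 2) * Real.exp (-q) ≤ -deriv l q ∧ -deriv l q ≤ Real.exp (-q))
    (γ : ℝ) (hγ : 0 < γ)
    (B : ℕ → Finset (Fin n)) (hB : ∀ k, (B k).Nonempty)
    (w : ℕ → EuclideanSpace ℝ (Fin d))
    (hw : ∀ k, w (k + 1) =
      w k - (γ / (B k).card) • ∑ i ∈ B k, deriv l (p i (w k)) • a i (w k))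
    (ε : ℝ) (hε : 0 < ε) (k₀ : ℕ)
    (hlate : ∀ k ≥ k₀, w k ≠ 0 ∧ ε ≤ ⨅ i, p i ((‖w k‖)⁻¹ • w k)) :
    ∃ C : ℝ, 0 < C ∧ ∃ M : ℝ, 0 < M ∧ ∀ k ≥ k₀,
      ‖w k‖ ^ 2 * (1 + C * γ * Real.exp (-M * ‖w k‖ ^ L) * ‖w k‖ ^ ((L : ℤ) - 2)) ≤
        ‖w (k + 1)‖ ^ 2 :=
  stmt_7_general hL p hplip hphom a haw l hl' γ hγ B hB w hw ε hε k₀ hlate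
end

section
/- Under the late-stage training assumption, there exist a constant C > 0 and an index k₁ ≥ k₀ such that for every k ≥ k₁, ‖w_{k+1}‖² ≤ ‖w_k‖²·(1 + C·γ·e^{−ε·‖w_k‖^L}·‖w_k‖^{L−2}). -/
open scoped RealInnerProductSpace

/-- Upper estimate on the growth of the squared norm of the iterates. -/
theorem stmt_8 {d n L : ℕ} (hd : 0 < d) (hn : 0 < n) (hL : 0 < L)
    (p : Fin n → EuclideanSpace ℝ (Fin d) → ℝ)
    (hplip : ∀ i, LocallyLipschitz (p i))
    (hphom : ∀ i, ∀ c : ℝ, 0 < c → ∀ w, p i (c • w) = c ^ L * p i w)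
    (a : Fin n → EuclideanSpace ℝ (Fin d) → EuclideanSpace ℝ (Fin d))
    (haw : ∀ i w, ⟪a i w, w⟫ = (L : ℝ) * p i w)
    (hahom : ∀ i, ∀ c : ℝ, 0 < c → ∀ w, a i (c • w) = c ^ (L - 1) • a i w)
    (habd : ∀ i, ∃ M : ℝ, ∀ u : EuclideanSpace ℝ (Fin d), ‖u‖ = 1 → ‖a i u‖ ≤ M)
    (l : ℝ → ℝ) (hl : Differentiable ℝ l)
    (hl' : ∀ q : ℝ, 0 ≤ q →
      (1 / 2) * Real.exp (-q) ≤ -deriv l q ∧ -deriv l q ≤ Real.exp (-q))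
    (γ : ℝ) (hγ : 0 < γ)
    (B : ℕ → Finset (Fin n)) (hB : ∀ k, (B k).Nonempty)
    (w : ℕ → EuclideanSpace ℝ (Fin d))
    (hw : ∀ k, w (k + 1) =
      w k - (γ / (B k).card) • ∑ i ∈ B k, deriv l (p i (w k)) • a i (w k))
    (ε : ℝ) (hε : 0 < ε) (k₀ : ℕ)
    (hlate : ∀ k ≥ k₀, w k ≠ 0 ∧ ε ≤ ⨅ i, p i ((‖w k‖)⁻¹ • w k)) :
    ∃ C : ℝ, 0 < C ∧ ∃ k₁ : ℕ, k₀ ≤ k₁ ∧ ∀ k ≥ k₁,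
      ‖w (k + 1)‖ ^ 2 ≤
        ‖w k‖ ^ 2 * (1 + C * γ * Real.exp (-ε * ‖w k‖ ^ L) * ‖w k‖ ^ ((L : ℤ) - 2)) := by
  classical
  choose Mf hMf using habd
  set M : ℝ := 1 + ∑ i : Fin n, |Mf i| with hMdef
  have hM1 : 1 ≤ M := by
    have : 0 ≤ ∑ i : Fin n, |Mf i| := Finset.sum_nonneg fun i _ => abs_nonneg _
    simp only [hMdef]; linarith
  have hM0 : 0 < M := lt_of_lt_of_le one_pos hM1
  have hMa : ∀ i (u : EuclideanSpace ℝ (Fin d)), ‖u‖ = 1 → ‖a i u‖ ≤ M := by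
    intro i u hu
    have h1 : Mf i ≤ ∑ j : Fin n, |Mf j| :=
      le_trans (le_abs_self _)
        (Finset.single_le_sum (fun j _ => abs_nonneg (Mf j)) (Finset.mem_univ i))
    refine le_trans (hMf i u hu) ?_
    simp only [hMdef]; linarith
  -- per-iterate facts
  have hkey : ∀ k, k₀ ≤ k →
      0 < ‖w k‖ ∧ (∀ i, ε * ‖w k‖ ^ L ≤ p i (w k)) ∧
        (∀ i, ‖a i (w k)‖ ≤ M * ‖w k‖ ^ (L - 1)) := by
    intro k hk
    obtain ⟨hw0, hinf⟩ := hlate k hk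
    have hr : 0 < ‖w k‖ := norm_pos_iff.mpr hw0
    set u := (‖w k‖)⁻¹ • w k with hudef
    have hu : ‖u‖ = 1 := by
      rw [hudef, norm_smul, norm_inv, norm_norm, inv_mul_cancel₀ hr.ne']
    have hru : ‖w k‖ • u = w k := by
      rw [hudef, smul_smul, mul_inv_cancel₀ hr.ne', one_smul]
    refine ⟨hr, ?_, ?_⟩
    · intro i
      have h1 : ε ≤ p i u := le_trans hinf (ciInf_le (Finite.bddBelow_range _) i)
      have h2 : p i (w k) = ‖w k‖ ^ L * p i u := by
        conv_lhs => rw [← hru]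
        exact hphom i _ hr u
      have h3 := mul_le_mul_of_nonneg_left h1 (pow_nonneg hr.le L)
      rw [h2]; linarith
    · intro i
      have h2 : a i (w k) = ‖w k‖ ^ (L - 1) • a i u := by
        conv_lhs => rw [← hru]
        exact hahom i _ hr u
      rw [h2, norm_smul, Real.norm_eq_abs, abs_of_nonneg (pow_nonneg hr.le _)]
      calc ‖w k‖ ^ (L-1) * ‖a i u‖ ≤ ‖w k‖ ^ (L-1) * M :=
            mul_le_mul_of_nonneg_left (hMa i u hu) (pow_nonneg hr.le _)
        _ = M * ‖w k‖ ^ (L-1) := mul_comm _ _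
  -- one-step estimate
  have hstep : ∀ k, k₀ ≤ k →
      ‖w k‖ ^ 2 ≤ ‖w (k+1)‖ ^ 2 ∧
      ‖w (k+1)‖ ^ 2 ≤ ‖w k‖ ^ 2
        + 2 * γ * Real.exp (-ε * ‖w k‖ ^ L) * (M * ‖w k‖ ^ L)
        + (γ * Real.exp (-ε * ‖w k‖ ^ L) * (M * ‖w k‖ ^ (L-1))) ^ 2 := by
    intro k hk
    obtain ⟨hr, hp, ha⟩ := hkey k hk
    set r := ‖w k‖ with hrdef
    set E := Real.exp (-ε * r ^ L) with hEdef
    have hE0 : 0 < E := Real.exp_pos _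
    have hεr : 0 < ε * r ^ L := mul_pos hε (pow_pos hr L)
    have hq0 : ∀ i, (0:ℝ) ≤ p i (w k) := fun i => le_trans hεr.le (hp i)
    have hd_le : ∀ i, -deriv l (p i (w k)) ≤ E := by
      intro i
      refine le_trans (hl' _ (hq0 i)).2 (Real.exp_le_exp.mpr ?_)
      have := hp i; linarith
    have hd_nonneg : ∀ i, 0 ≤ -deriv l (p i (w k)) := by
      intro i
      refine le_trans ?_ (hl' _ (hq0 i)).1
      positivity
    have hLp_nonneg : ∀ i, (0:ℝ) ≤ (L:ℝ) * p i (w k) := fun i =>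
      mul_nonneg (Nat.cast_nonneg L) (hq0 i)
    have hLp_bound : ∀ i, (L:ℝ) * p i (w k) ≤ M * r ^ L := by
      intro i
      calc (L:ℝ) * p i (w k) = ⟪a i (w k), w k⟫ := (haw i (w k)).symm
        _ ≤ ‖a i (w k)‖ * ‖w k‖ := real_inner_le_norm _ _
        _ ≤ (M * r ^ (L-1)) * r := mul_le_mul_of_nonneg_right (ha i) hr.le
        _ = M * r ^ L := by rw [mul_assoc, ← pow_succ, Nat.sub_add_cancel hL]
    have hcard : (0:ℝ) < (B k).card := by exact_mod_cast (hB k).card_pos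
    have hcoef : 0 ≤ γ / (B k).card := div_nonneg hγ.le hcard.le
    set g := (γ / ((B k).card : ℝ)) • ∑ i ∈ B k, deriv l (p i (w k)) • a i (w k) with hgdef
    have hsq : ‖w (k+1)‖ ^ 2 = ‖w k‖ ^ 2 - 2 * ⟪w k, g⟫ + ‖g‖ ^ 2 := by
      rw [hw k]; exact norm_sub_sq_real _ _
    have hinner : ⟪w k, g⟫ =
        (γ / ((B k).card : ℝ)) * ∑ i ∈ B k, deriv l (p i (w k)) * ((L:ℝ) * p i (w k)) := by
      rw [hgdef, real_inner_smul_right, inner_sum]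
      congr 1
      refine Finset.sum_congr rfl fun i _ => ?_
      rw [real_inner_smul_right, real_inner_comm, haw]
    have hterm_le0 : ∀ i ∈ B k, deriv l (p i (w k)) * ((L:ℝ) * p i (w k)) ≤ 0 := by
      intro i _
      have := hd_nonneg i
      exact mul_nonpos_of_nonpos_of_nonneg (by linarith) (hLp_nonneg i)
    have hterm_ge : ∀ i ∈ B k,
        -(E * (M * r ^ L)) ≤ deriv l (p i (w k)) * ((L:ℝ) * p i (w k)) := by
      intro i _
      have h := mul_le_mul (hd_le i) (hLp_bound i) (hLp_nonneg i) hE0.le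
      rw [neg_mul] at h
      linarith
    have hS_le : ∑ i ∈ B k, deriv l (p i (w k)) * ((L:ℝ) * p i (w k)) ≤ 0 :=
      Finset.sum_nonpos hterm_le0
    have hS_ge : -(((B k).card : ℝ) * (E * (M * r ^ L))) ≤
        ∑ i ∈ B k, deriv l (p i (w k)) * ((L:ℝ) * p i (w k)) := by
      have h := Finset.card_nsmul_le_sum (B k) _ _ hterm_ge
      rw [nsmul_eq_mul] at h
      linarith
    have hinner_le0 : ⟪w k, g⟫ ≤ 0 := by
      rw [hinner]; exact mul_nonpos_of_nonneg_of_nonpos hcoef hS_le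
    have hinner_ge : -(γ * (E * (M * r ^ L))) ≤ ⟪w k, g⟫ := by
      rw [hinner]
      have h := mul_le_mul_of_nonneg_left hS_ge hcoef
      have hcc : γ / ((B k).card : ℝ) * (((B k).card : ℝ) * (E * (M * r ^ L)))
          = γ * (E * (M * r ^ L)) := by
        field_simp
      rw [mul_neg, hcc] at h
      exact h
    have hterm_norm : ∀ i ∈ B k, ‖deriv l (p i (w k)) • a i (w k)‖ ≤ E * (M * r ^ (L-1)) := by
      intro i _
      rw [norm_smul, Real.norm_eq_abs, abs_of_nonpos (by linarith [hd_nonneg i])]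
      exact mul_le_mul (hd_le i) (ha i) (norm_nonneg _) hE0.le
    have hsum_norm : ‖∑ i ∈ B k, deriv l (p i (w k)) • a i (w k)‖ ≤
        ((B k).card : ℝ) * (E * (M * r ^ (L-1))) := by
      refine le_trans (norm_sum_le _ _) ?_
      have h2 := Finset.sum_le_card_nsmul (B k) _ _ hterm_norm
      rwa [nsmul_eq_mul] at h2
    have hg_norm : ‖g‖ ≤ γ * E * (M * r ^ (L-1)) := by
      rw [hgdef, norm_smul, Real.norm_eq_abs, abs_of_nonneg hcoef]
      have h3 := mul_le_mul_of_nonneg_left hsum_norm hcoef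
      have h4 : γ / ((B k).card : ℝ) * (((B k).card : ℝ) * (E * (M * r ^ (L-1))))
          = γ * E * (M * r ^ (L-1)) := by field_simp
      rw [h4] at h3; exact h3
    have hg_sq : ‖g‖ ^ 2 ≤ (γ * E * (M * r ^ (L-1))) ^ 2 :=
      pow_le_pow_left₀ (norm_nonneg g) hg_norm 2
    constructor
    · have h0 : (0:ℝ) ≤ ‖g‖ ^ 2 := sq_nonneg _
      rw [hsq]; linarith
    · rw [hsq]; linarith
  -- monotone norms
  have hmono : ∀ k, k₀ ≤ k → ‖w k₀‖ ≤ ‖w k‖ := by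
    intro k hk
    induction k, hk using Nat.le_induction with
    | base => exact le_refl _
    | succ k hk ih =>
      have h := (hstep k hk).1
      have h2 : ‖w k‖ ≤ ‖w (k+1)‖ := by
        nlinarith [norm_nonneg (w k), norm_nonneg (w (k+1))]
      linarith
  set r₀ := ‖w k₀‖ with hr0def
  have hr0 : 0 < r₀ := (hkey k₀ le_rfl).1
  refine ⟨2*M + γ*M^2/(ε*r₀^2), by positivity, k₀, le_rfl, ?_⟩
  intro k hk
  obtain ⟨hr, hp, ha⟩ := hkey k hk
  set r := ‖w k‖ with hrdef
  set E := Real.exp (-ε * r ^ L) with hEdef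
  have hE0 : 0 < E := Real.exp_pos _
  have hεr : 0 < ε * r ^ L := mul_pos hε (pow_pos hr L)
  have hupper := (hstep k hk).2
  rw [← hrdef] at hupper
  rw [← hEdef] at hupper
  have hEsmall : E * (ε * r ^ L) ≤ 1 := by
    have h1 : ε * r ^ L ≤ Real.exp (ε * r ^ L) := by
      linarith [Real.add_one_le_exp (ε * r ^ L)]
    calc E * (ε * r ^ L) ≤ E * Real.exp (ε * r ^ L) :=
          mul_le_mul_of_nonneg_left h1 hE0.le
      _ = 1 := by rw [hEdef, ← Real.exp_add]; ring_nf; exact Real.exp_zero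
  have hzpow : r ^ ((L:ℤ) - 2) * r ^ (2:ℕ) = r ^ L := by
    calc r ^ ((L:ℤ)-2) * r ^ (2:ℕ) = r ^ ((L:ℤ)-2) * r ^ ((2:ℕ):ℤ) := by
          rw [zpow_natCast]
      _ = r ^ (((L:ℤ)-2) + 2) := (zpow_add₀ hr.ne' _ _).symm
      _ = r ^ (L:ℤ) := by norm_num
      _ = r ^ L := zpow_natCast r L
  have hkeypow : (r ^ (L-1)) ^ 2 * r ^ 2 = r ^ L * r ^ L := by
    rw [← pow_mul, ← pow_add, ← pow_add]
    congr 1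
    omega
  have hRHS : r^2 * (1 + (2*M + γ*M^2/(ε*r₀^2)) * γ * E * r ^ ((L:ℤ)-2))
      = r^2 + (2*M + γ*M^2/(ε*r₀^2)) * γ * (E * r ^ L) := by
    rw [← hzpow]; ring
  rw [hRHS]
  have hquad : (γ * E * (M * r ^ (L-1))) ^ 2 ≤ γ*M^2/(ε*r₀^2) * γ * (E * r ^ L) := by
    have hpos : (0:ℝ) < ε * r₀ ^ 2 := by positivity
    have heq : γ*M^2/(ε*r₀^2) * γ * (E * r ^ L) = (γ^2*M^2*(E * r ^ L))/(ε*r₀^2) := by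
      ring
    rw [heq, le_div_iff₀ hpos]
    have h1 : E^2 * (r ^ (L-1))^2 * ε * r₀^2 ≤ E^2 * (r ^ (L-1))^2 * ε * r^2 := by
      have hle : r₀^2 ≤ r^2 := pow_le_pow_left₀ hr0.le (hmono k hk) 2
      have hA : (0:ℝ) ≤ E^2 * (r ^ (L-1))^2 * ε := by positivity
      exact mul_le_mul_of_nonneg_left hle hA
    have h2 : E^2 * (r ^ (L-1))^2 * ε * r^2 = (E * (ε * r ^ L)) * (E * r ^ L) := by
      calc E^2 * (r ^ (L-1))^2 * ε * r^2 = E*E*ε*((r ^ (L-1))^2 * r^2) := by ring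
        _ = E*E*ε*(r ^ L * r ^ L) := by rw [hkeypow]
        _ = (E * (ε * r ^ L)) * (E * r ^ L) := by ring
    have h3 : (E * (ε * r ^ L)) * (E * r ^ L) ≤ 1 * (E * r ^ L) :=
      mul_le_mul_of_nonneg_right hEsmall (by positivity)
    calc (γ * E * (M * r ^ (L-1))) ^ 2 * (ε*r₀^2)
        = γ^2*M^2 * (E^2 * (r ^ (L-1))^2 * ε * r₀^2) := by ring
      _ ≤ γ^2*M^2 * (E * r ^ L) := by
          have : E^2 * (r ^ (L-1))^2 * ε * r₀^2 ≤ E * r ^ L := by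
            calc E^2 * (r ^ (L-1))^2 * ε * r₀^2 ≤ E^2 * (r ^ (L-1))^2 * ε * r^2 := h1
              _ = (E * (ε * r ^ L)) * (E * r ^ L) := h2
              _ ≤ 1 * (E * r ^ L) := h3
              _ = E * r ^ L := one_mul _
          exact mul_le_mul_of_nonneg_left this (by positivity)
      _ = γ^2*M^2*(E * r ^ L) := by ring
  have hsplit : (2*M + γ*M^2/(ε*r₀^2)) * γ * (E * r ^ L)
      = 2 * γ * E * (M * r ^ L) + γ*M^2/(ε*r₀^2) * γ * (E * r ^ L) := by ring
  clear_value M r E r₀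
  linarith [hupper, hquad, hsplit]
end

section
/- Let (m_k)_{k∈ℕ} be a nondecreasing sequence of nonnegative real numbers and suppose there exist constants a > 0 and C > 0 such that e^{a·m_k}·(m_{k+1} − m_k) ≤ C for every k. Then there exist a constant c₂ > 0 and an index k₁ ∈ ℕ such that m_k ≤ c₂·log k for all k ≥ k₁. -/
/-- `e^x - 1 ≤ x e^x` for `x ≥ 0`. -/
lemma aux_exp_sub_one_le (x : ℝ) (hx : 0 ≤ x) :
    Real.exp x - 1 ≤ x * Real.exp x := by
  have h := Real.add_one_le_exp (-x)
  have hpos := Real.exp_pos x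
  have hinv : Real.exp (-x) = (Real.exp x)⁻¹ := Real.exp_neg x
  rw [hinv] at h
  have h2 := mul_le_mul_of_nonneg_right h hpos.le
  rw [inv_mul_cancel₀ hpos.ne'] at h2
  nlinarith

/-- Scalar comparison lemma: logarithmic upper bound. -/
theorem stmt_9 (m : ℕ → ℝ) (hmono : Monotone m) (hnonneg : ∀ k, 0 ≤ m k)
    (a C : ℝ) (ha : 0 < a) (hC : 0 < C)
    (hbound : ∀ k, Real.exp (a * m k) * (m (k + 1) - m k) ≤ C) :
    ∃ c₂ : ℝ, 0 < c₂ ∧ ∃ k₁ : ℕ, ∀ k ≥ k₁, m k ≤ c₂ * Real.log k := by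
  set D : ℝ := a * C * Real.exp (a * C) with hD
  set E : ℝ := Real.exp (a * m 0) with hE
  have hDpos : 0 < D := by positivity
  have hEpos : 0 < E := Real.exp_pos _
  -- step bound
  have hstep : ∀ k, Real.exp (a * m (k + 1)) - Real.exp (a * m k) ≤ D := by
    intro k
    set d : ℝ := m (k + 1) - m k with hd
    have hd0 : 0 ≤ d := sub_nonneg.mpr (hmono (Nat.le_succ k))
    have hexp1 : (1 : ℝ) ≤ Real.exp (a * m k) :=
      Real.one_le_exp (mul_nonneg ha.le (hnonneg k))
    have hdC : d ≤ C := by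
      have := hbound k
      nlinarith
    have key : Real.exp (a * d) - 1 ≤ a * d * Real.exp (a * C) := by
      have had : 0 ≤ a * d := mul_nonneg ha.le hd0
      have h1 := aux_exp_sub_one_le (a * d) had
      have h2 : Real.exp (a * d) ≤ Real.exp (a * C) :=
        Real.exp_le_exp.mpr (by nlinarith)
      nlinarith [mul_le_mul_of_nonneg_left h2 had]
    have hsplit : a * m (k + 1) = a * m k + a * d := by ring
    rw [hsplit, Real.exp_add]
    have hb := hbound k
    have hEk := Real.exp_pos (a * m k)
    calc Real.exp (a * m k) * Real.exp (a * d) - Real.exp (a * m k)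
        = Real.exp (a * m k) * (Real.exp (a * d) - 1) := by ring
      _ ≤ Real.exp (a * m k) * (a * d * Real.exp (a * C)) := by
          exact mul_le_mul_of_nonneg_left key (le_of_lt hEk)
      _ = a * Real.exp (a * C) * (Real.exp (a * m k) * d) := by ring
      _ ≤ a * Real.exp (a * C) * C := by
          exact mul_le_mul_of_nonneg_left hb (by positivity)
      _ = D := by rw [hD]; ring
  -- telescoping
  have hsum : ∀ k : ℕ, Real.exp (a * m k) ≤ E + D * k := by
    intro k
    induction k with
    | zero => simp [hE]
    | succ n ih =>
      have := hstep n
      push_cast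
      nlinarith
  refine ⟨2 / a, by positivity, ⌈E + D⌉₊ + 3, fun k hk => ?_⟩
  have hk3 : (3 : ℕ) ≤ k := le_trans (Nat.le_add_left 3 _) hk
  have hk1 : (1 : ℝ) ≤ (k : ℝ) := Nat.one_le_cast.mpr (by omega)
  have hED : E + D ≤ (k : ℝ) := by
    calc E + D ≤ (⌈E + D⌉₊ : ℝ) := Nat.le_ceil _
      _ ≤ (k : ℝ) := by exact_mod_cast le_trans (Nat.le_add_right _ 3) hk
  have hlogk : Real.log (E + D) ≤ Real.log k :=
    Real.log_le_log (by positivity) hED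
  have h1 : a * m k ≤ Real.log (E + D * k) := by
    have := hsum k
    calc a * m k = Real.log (Real.exp (a * m k)) := (Real.log_exp _).symm
      _ ≤ Real.log (E + D * k) := Real.log_le_log (Real.exp_pos _) this
  have h2 : Real.log (E + D * k) ≤ Real.log (E + D) + Real.log k := by
    rw [← Real.log_mul (by positivity) (by positivity)]
    apply Real.log_le_log (by positivity)
    nlinarith
  have h3 : a * m k ≤ 2 * Real.log k := by
    calc a * m k ≤ Real.log (E + D * k) := h1
      _ ≤ Real.log (E + D) + Real.log k := h2
      _ ≤ 2 * Real.log k := by linarith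
  rw [div_mul_eq_mul_div, le_div_iff₀ ha]
  linarith
end

section
/- Let (m_k)_{k∈ℕ} be a nondecreasing sequence of nonnegative real numbers and suppose there exist constants a > 0, c > 0 and an index k₀ ∈ ℕ such that e^{a·m_k}·(m_{k+1} − m_k) ≥ c for every k ≥ k₀. Then there exist a constant c₁ > 0 and an index k₁ ∈ ℕ such that m_k ≥ c₁·log k for all k ≥ k₁; in particular m_k → +∞. -/
/-- Scalar comparison lemma: logarithmic lower bound, hence divergence. -/
theorem stmt_10 (m : ℕ → ℝ) (hmono : Monotone m) (hnonneg : ∀ k, 0 ≤ m k)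
    (a c : ℝ) (ha : 0 < a) (hc : 0 < c) (k₀ : ℕ)
    (hbound : ∀ k ≥ k₀, c ≤ Real.exp (a * m k) * (m (k + 1) - m k)) :
    (∃ c₁ : ℝ, 0 < c₁ ∧ ∃ k₁ : ℕ, ∀ k ≥ k₁, c₁ * Real.log k ≤ m k) ∧
      Filter.Tendsto m Filter.atTop Filter.atTop := by
  -- Step 1: exponential growth of exp (a * m k)
  have step1 : ∀ k ≥ k₀, 1 + a * c * ((k : ℝ) - (k₀ : ℝ)) ≤ Real.exp (a * m k) := by
    intro k hk
    induction k, hk using Nat.le_induction with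
    | base =>
        simp only [sub_self, mul_zero, add_zero]
        have : 0 ≤ a * m k₀ := mul_nonneg ha.le (hnonneg k₀)
        calc (1 : ℝ) = Real.exp 0 := Real.exp_zero.symm
          _ ≤ Real.exp (a * m k₀) := Real.exp_le_exp.mpr this
    | succ k hk ih =>
        have hb := hbound k hk
        have hΔ := Real.add_one_le_exp (a * (m (k + 1) - m k))
        have hE : 0 < Real.exp (a * m k) := Real.exp_pos _
        have key : Real.exp (a * m k) * (a * (m (k + 1) - m k) + 1)
            ≤ Real.exp (a * m (k + 1)) := by
          have := mul_le_mul_of_nonneg_left hΔ hE.le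
          calc Real.exp (a * m k) * (a * (m (k + 1) - m k) + 1)
              ≤ Real.exp (a * m k) * Real.exp (a * (m (k + 1) - m k)) := this
            _ = Real.exp (a * m k + a * (m (k + 1) - m k)) := (Real.exp_add _ _).symm
            _ = Real.exp (a * m (k + 1)) := by ring_nf
        have h2 : Real.exp (a * m k) + a * c ≤ Real.exp (a * m (k + 1)) := by
          nlinarith [mul_le_mul_of_nonneg_left hb ha.le]
        have hcast : ((k + 1 : ℕ) : ℝ) = (k : ℝ) + 1 := by push_cast; ring
        rw [hcast]
        nlinarith
  -- Step 2: logarithmic lower bound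
  have hac : 0 < a * c := mul_pos ha hc
  obtain ⟨N, hN⟩ := exists_nat_ge ((2 / (a * c)) ^ 2)
  set k₁ : ℕ := max (2 * k₀ + 1) (max N 2) with hk₁
  have main : ∀ k ≥ k₁, (1 / (2 * a)) * Real.log k ≤ m k := by
    intro k hk
    have hkk₀ : k₀ ≤ k := by omega
    have hk2k₀ : (2 * k₀ : ℕ) ≤ k := by omega
    have hkN : (N : ℝ) ≤ (k : ℝ) := by exact_mod_cast Nat.cast_le.mpr (by omega)
    have hk0 : (0 : ℝ) < (k : ℝ) := by
      have : (2 : ℕ) ≤ k := by omega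
      exact_mod_cast Nat.lt_of_lt_of_le (by norm_num) this
    have hkbig : (2 / (a * c)) ^ 2 ≤ (k : ℝ) := le_trans hN hkN
    have h4 : 4 ≤ (a * c) ^ 2 * (k : ℝ) := by
      have h := hkbig
      rw [div_pow, div_le_iff₀ (by positivity)] at h
      nlinarith
    -- k - k₀ ≥ k/2
    have hhalf : (k : ℝ) / 2 ≤ (k : ℝ) - (k₀ : ℝ) := by
      have : (k₀ : ℝ) ≤ (k : ℝ) / 2 := by
        have : ((2 * k₀ : ℕ) : ℝ) ≤ (k : ℝ) := by exact_mod_cast hk2k₀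
        push_cast at this
        linarith
      linarith
    -- sqrt k ≤ a*c*k/2
    have hsq : Real.sqrt k ≤ a * c * (k : ℝ) / 2 := by
      have h1 : (k : ℝ) ≤ (a * c * (k : ℝ) / 2) ^ 2 := by nlinarith
      calc Real.sqrt k ≤ Real.sqrt ((a * c * (k : ℝ) / 2) ^ 2) := Real.sqrt_le_sqrt h1
        _ = a * c * (k : ℝ) / 2 := Real.sqrt_sq (by positivity)
    have hchain : Real.sqrt k ≤ 1 + a * c * ((k : ℝ) - (k₀ : ℝ)) := by
      have : a * c * ((k : ℝ) / 2) ≤ a * c * ((k : ℝ) - (k₀ : ℝ)) :=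
        mul_le_mul_of_nonneg_left hhalf hac.le
      nlinarith
    have hpos : 0 < Real.sqrt k := Real.sqrt_pos.mpr hk0
    have hlog : Real.log (Real.sqrt k) ≤ a * m k := by
      calc Real.log (Real.sqrt k) ≤ Real.log (1 + a * c * ((k : ℝ) - (k₀ : ℝ))) :=
            Real.log_le_log hpos hchain
        _ ≤ Real.log (Real.exp (a * m k)) :=
            Real.log_le_log (lt_of_lt_of_le hpos hchain) (step1 k hkk₀)
        _ = a * m k := Real.log_exp _
    rw [Real.log_sqrt hk0.le] at hlog
    rw [div_mul_eq_mul_div, one_mul, div_le_iff₀ (by positivity)]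
    nlinarith
  have hc₁ : (0 : ℝ) < 1 / (2 * a) := by positivity
  refine ⟨⟨1 / (2 * a), hc₁, k₁, main⟩, ?_⟩
  have htend : Filter.Tendsto (fun k : ℕ => (1 / (2 * a)) * Real.log k)
      Filter.atTop Filter.atTop := by
    have hlog : Filter.Tendsto (fun k : ℕ => Real.log k) Filter.atTop Filter.atTop :=
      Real.tendsto_log_atTop.comp tendsto_natCast_atTop_atTop
    exact hlog.const_mul_atTop hc₁
  exact Filter.tendsto_atTop_mono' Filter.atTop
    (Filter.eventually_atTop.mpr ⟨k₁, main⟩) htend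
end

section
/- Define the effective step sizes γ̄_k := γ·‖w_k‖^{L−2}·Σ_{j=1}^n (−l′(p_j(w_k))). Under the late-stage training assumption, the effective step sizes are not summable: Σ_{k≥k₀} γ̄_k = +∞. -/
/-!
From `k₀` on, `p i (w k) ≥ ε ‖w k‖ ^ L ≥ 0`, so each update direction `-l'(p i) • a i (w k)`
has nonnegative inner product `-l'(p i) · L · p i (w k)` with `w k`, and `‖w k‖` is
nondecreasing. With `M` a bound of the `‖a i‖` on the unit sphere, homogeneity bounds the
update by `γ M ‖w k‖ ^ (L - 1) ∑ j, -l'(p j (w k))`, so `log ‖w k‖` grows by at most `M γ̄_k`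
per step. If `‖w k‖` is unbounded, the telescoping sum of `log ‖w k‖` forces `∑ γ̄_k = ∞`.
If it is bounded, `w k` stays in an annulus, where `p i₀ (w k) ≤ C ‖w k‖ ^ L` (with `C` a bound
of `p i₀` on the unit sphere) keeps `γ̄_k ≥ (γ / 2) ‖w k‖ ^ (L - 2) exp (-C ‖w k‖ ^ L)` away
from `0`.
-/

open scoped RealInnerProductSpace
open Filter Finset Set Real

theorem tendsto_sum_Ico_atTop_of_le {f : ℕ → ℝ} {δ : ℝ} {k₀ : ℕ} (hδ : 0 < δ)
    (hf : ∀ k ≥ k₀, δ ≤ f k) :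
    Tendsto (fun K => ∑ k ∈ Ico k₀ K, f k) atTop atTop := by
  have hlin : ∀ K, δ * ((K - k₀ : ℕ) : ℝ) ≤ ∑ k ∈ Ico k₀ K, f k := fun K =>
    calc δ * ((K - k₀ : ℕ) : ℝ) = ∑ _k ∈ Ico k₀ K, δ := by
          rw [sum_const, Nat.card_Ico, nsmul_eq_mul, mul_comm]
      _ ≤ ∑ k ∈ Ico k₀ K, f k := sum_le_sum fun k hk => hf k (mem_Ico.1 hk).1
  exact tendsto_atTop_mono hlin
    ((tendsto_natCast_atTop_atTop.comp (tendsto_sub_atTop_nat k₀)).const_mul_atTop hδ)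

theorem tendsto_sum_Ico_atTop_of_log_growth_le {N f : ℕ → ℝ} {g : ℝ → ℝ} {c : ℝ} {k₀ : ℕ}
    (hc : 0 < c) (hN : ∀ k ≥ k₀, 0 < N k) (hN_mono : ∀ k ≥ k₀, N k ≤ N (k + 1))
    (hg : ContinuousOn g (Ioi 0)) (hg_pos : ∀ x > 0, 0 < g x)
    (hgf : ∀ k ≥ k₀, g (N k) ≤ f k) (hlog : ∀ k ≥ k₀, c * (log (N (k + 1)) - log (N k)) ≤ f k) :
    Tendsto (fun K => ∑ k ∈ Ico k₀ K, f k) atTop atTop := by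
  have hf_nonneg : ∀ k ≥ k₀, 0 ≤ f k := fun k hk => (hg_pos _ (hN k hk)).le.trans (hgf k hk)
  have hsum_mono : Monotone fun K => ∑ k ∈ Ico k₀ K, f k := monotone_nat_of_le_succ fun K =>
    sum_le_sum_of_subset_of_nonneg (Ico_subset_Ico_right K.le_succ)
      fun k hk _ => hf_nonneg k (mem_Ico.1 hk).1
  refine hsum_mono.tendsto_atTop_atTop fun b => ?_
  by_contra! hb
  set R := exp (log (N k₀) + b / c)
  have hN_le : ∀ K ≥ k₀, N K ≤ R := fun K hK => by
    have htel : c * (log (N K) - log (N k₀)) ≤ ∑ k ∈ Ico k₀ K, f k := by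
      rw [← sum_Ico_sub (fun k => log (N k)) hK, mul_sum]
      exact sum_le_sum fun k hk => hlog k (mem_Ico.1 hk).1
    refine ((log_lt_iff_lt_exp (hN K hK)).1 ?_).le
    have := htel.trans_lt (hb K)
    rw [← lt_div_iff₀' hc] at this
    linarith
  have hN_ge : ∀ K ≥ k₀, N k₀ ≤ N K := fun K hK =>
    monotoneOn_nat_Ici_of_le_succ hN_mono (mem_Ici.2 le_rfl) (mem_Ici.2 hK) hK
  obtain ⟨x₀, hx₀, hmin⟩ := isCompact_Icc.exists_isMinOn
    (nonempty_Icc.2 (hN_le k₀ le_rfl)) (hg.mono fun x hx => (hN k₀ le_rfl).trans_le hx.1)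
  have hlower : ∀ k ≥ k₀, g x₀ ≤ f k := fun k hk =>
    (hmin ⟨hN_ge k hk, hN_le k hk⟩).trans (hgf k hk)
  obtain ⟨K, hK⟩ := ((tendsto_sum_Ico_atTop_of_le
    (hg_pos x₀ ((hN k₀ le_rfl).trans_le hx₀.1)) hlower).eventually_ge_atTop b).exists
  exact (hb K).not_ge hK

theorem norm_le_norm_add_of_inner_nonneg {E : Type*} [NormedAddCommGroup E]
    [InnerProductSpace ℝ E] {x v : E} (h : 0 ≤ ⟪v, x⟫) : ‖x‖ ≤ ‖x + v‖ := by
  rcases eq_or_ne x 0 with rfl | hx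
  · simp
  have : ‖x‖ * ‖x‖ ≤ ‖x + v‖ * ‖x‖ := calc
    ‖x‖ * ‖x‖ ≤ ⟪x + v, x⟫ := by
      rw [inner_add_left, real_inner_self_eq_norm_mul_norm]; linarith
    _ ≤ ‖x + v‖ * ‖x‖ := real_inner_le_norm _ _
  exact le_of_mul_le_mul_right this (norm_pos_iff.2 hx)

theorem log_norm_add_sub_log_norm_le {E : Type*} [NormedAddCommGroup E]
    [InnerProductSpace ℝ E] {x v : E} (hx : x ≠ 0) (h : 0 ≤ ⟪v, x⟫) :
    log ‖x + v‖ - log ‖x‖ ≤ ‖v‖ / ‖x‖ := by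
  have hx' : 0 < ‖x‖ := norm_pos_iff.2 hx
  have hxv := norm_le_norm_add_of_inner_nonneg h
  calc log ‖x + v‖ - log ‖x‖ = log (‖x + v‖ / ‖x‖) :=
        (log_div (hx'.trans_le hxv).ne' hx'.ne').symm
    _ ≤ ‖x + v‖ / ‖x‖ - 1 := log_le_sub_one_of_pos (div_pos (hx'.trans_le hxv) hx')
    _ = (‖x + v‖ - ‖x‖) / ‖x‖ := by field_simp
    _ ≤ ‖v‖ / ‖x‖ := by
      gcongr
      linarith [norm_add_le x v]

section Homogeneous

variable {E F : Type*} [NormedAddCommGroup E] [NormedSpace ℝ E] {k : ℕ}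

theorem eq_norm_pow_smul_of_homogeneous [AddCommGroup F] [Module ℝ F] {f : E → F}
    (hf : ∀ c : ℝ, 0 < c → ∀ w, f (c • w) = c ^ k • f w) {w : E} (hw : w ≠ 0) :
    f w = ‖w‖ ^ k • f (‖w‖⁻¹ • w) := by
  have hw' : 0 < ‖w‖ := norm_pos_iff.2 hw
  rw [← hf _ hw', smul_inv_smul₀ hw'.ne']

theorem norm_le_mul_norm_pow_of_homogeneous [NormedAddCommGroup F] [NormedSpace ℝ F]
    {f : E → F} (hf : ∀ c : ℝ, 0 < c → ∀ w, f (c • w) = c ^ k • f w) {M : ℝ}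
    (hM : ∀ u : E, ‖u‖ = 1 → ‖f u‖ ≤ M) {w : E} (hw : w ≠ 0) : ‖f w‖ ≤ M * ‖w‖ ^ k := by
  rw [eq_norm_pow_smul_of_homogeneous hf hw, norm_smul, norm_pow, norm_norm, mul_comm]
  gcongr
  exact hM _ (norm_smul_inv_norm (𝕜 := ℝ) hw)

theorem le_mul_norm_pow_of_homogeneous {f : E → ℝ}
    (hf : ∀ c : ℝ, 0 < c → ∀ w, f (c • w) = c ^ k * f w) {C : ℝ}
    (hC : ∀ u : E, ‖u‖ = 1 → f u ≤ C) {w : E} (hw : w ≠ 0) : f w ≤ C * ‖w‖ ^ k := by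
  rw [eq_norm_pow_smul_of_homogeneous hf hw, smul_eq_mul, mul_comm C]
  gcongr
  exact hC _ (norm_smul_inv_norm (𝕜 := ℝ) hw)

theorem mul_norm_pow_le_of_homogeneous {f : E → ℝ}
    (hf : ∀ c : ℝ, 0 < c → ∀ w, f (c • w) = c ^ k * f w) {ε : ℝ} {w : E} (hw : w ≠ 0)
    (hε : ε ≤ f (‖w‖⁻¹ • w)) : ε * ‖w‖ ^ k ≤ f w := by
  rw [eq_norm_pow_smul_of_homogeneous hf hw, smul_eq_mul, mul_comm ε]
  gcongr

end Homogeneous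

theorem exists_pos_forall_le_of_finite {ι α : Type*} [Finite ι] {S : Set α} {f : ι → α → ℝ}
    (h : ∀ i, ∃ M, ∀ x ∈ S, f i x ≤ M) : ∃ M > 0, ∀ i, ∀ x ∈ S, f i x ≤ M := by
  choose M hM using h
  obtain ⟨M', hM'⟩ := Finite.bddAbove_range M
  exact ⟨max M' 1, by positivity, fun i x hx =>
    (hM i x hx).trans ((hM' ⟨i, rfl⟩).trans (le_max_left _ _))⟩

section LossWeights

variable {ι : Type*} [Fintype ι] {φ : ℝ → ℝ} {q : ι → ℝ}

theorem neg_nonneg_of_half_exp_le (hφ : ∀ q, 0 ≤ q → 1 / 2 * exp (-q) ≤ -φ q) {x : ℝ}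
    (hx : 0 ≤ x) : 0 ≤ -φ x :=
  (by positivity : (0 : ℝ) ≤ 1 / 2 * exp (-x)).trans (hφ x hx)

theorem neg_le_sum_neg (hφ : ∀ q, 0 ≤ q → 1 / 2 * exp (-q) ≤ -φ q) (hq : ∀ i, 0 ≤ q i)
    (i : ι) : -φ (q i) ≤ ∑ j, -φ (q j) :=
  single_le_sum (f := fun j => -φ (q j)) (fun j _ => neg_nonneg_of_half_exp_le hφ (hq j))
    (mem_univ i)

theorem half_exp_le_sum_neg (hφ : ∀ q, 0 ≤ q → 1 / 2 * exp (-q) ≤ -φ q) (hq : ∀ i, 0 ≤ q i)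
    {i : ι} {x : ℝ} (hx : q i ≤ x) : 1 / 2 * exp (-x) ≤ ∑ j, -φ (q j) :=
  le_trans (by gcongr) ((hφ _ (hq i)).trans (neg_le_sum_neg hφ hq i))

end LossWeights

section BatchStep

variable {E ι : Type*} [NormedAddCommGroup E] [InnerProductSpace ℝ E]
  (p : ι → E → ℝ) (a : ι → E → E) (φ : ℝ → ℝ)

/-- `φ` stands for `l'` and `a i` for a (sub)gradient of `p i`. -/
noncomputable def batchStep (γ : ℝ) (B : Finset ι) (w : E) : E :=
  w - (γ / #B) • ∑ i ∈ B, φ (p i w) • a i w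

variable {p a φ} {L : ℕ} {γ : ℝ} {B : Finset ι} {w : E}

theorem inner_batchStep_sub_nonneg (hφ : ∀ q, 0 ≤ q → 1 / 2 * exp (-q) ≤ -φ q)
    (haw : ∀ i w, ⟪a i w, w⟫ = L * p i w) (hγ : 0 ≤ γ) (hp : ∀ i, 0 ≤ p i w) :
    0 ≤ ⟪batchStep p a φ γ B w - w, w⟫ := by
  rw [batchStep, sub_sub_cancel_left, inner_neg_left, real_inner_smul_left, sum_inner, neg_nonneg]
  refine mul_nonpos_of_nonneg_of_nonpos (by positivity) (sum_nonpos fun i _ => ?_)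
  rw [real_inner_smul_left, haw]
  exact mul_nonpos_of_nonpos_of_nonneg (neg_nonneg.1 (neg_nonneg_of_half_exp_le hφ (hp i)))
    (mul_nonneg (Nat.cast_nonneg _) (hp i))

theorem norm_le_norm_batchStep (hφ : ∀ q, 0 ≤ q → 1 / 2 * exp (-q) ≤ -φ q)
    (haw : ∀ i w, ⟪a i w, w⟫ = L * p i w) (hγ : 0 ≤ γ) (hp : ∀ i, 0 ≤ p i w) :
    ‖w‖ ≤ ‖batchStep p a φ γ B w‖ := by
  simpa using norm_le_norm_add_of_inner_nonneg (inner_batchStep_sub_nonneg hφ haw hγ hp)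

theorem norm_sub_batchStep_le [Fintype ι] (hφ : ∀ q, 0 ≤ q → 1 / 2 * exp (-q) ≤ -φ q)
    (hγ : 0 ≤ γ) (hB : B.Nonempty) (hp : ∀ i, 0 ≤ p i w) {K : ℝ} (hK : ∀ i, ‖a i w‖ ≤ K) :
    ‖batchStep p a φ γ B w - w‖ ≤ γ * K * ∑ j, -φ (p j w) := by
  have hB' : (0 : ℝ) < #B := by exact_mod_cast hB.card_pos
  have hterm : ∀ i ∈ B, ‖φ (p i w) • a i w‖ ≤ (∑ j, -φ (p j w)) * K := fun i _ => by
    have hφi := neg_le_sum_neg hφ hp i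
    have hφi_nonneg := neg_nonneg_of_half_exp_le hφ (hp i)
    rw [norm_smul, Real.norm_eq_abs, abs_of_nonpos (by linarith)]
    exact mul_le_mul hφi (hK i) (norm_nonneg _) (hφi_nonneg.trans hφi)
  calc ‖batchStep p a φ γ B w - w‖ = γ / #B * ‖∑ i ∈ B, φ (p i w) • a i w‖ := by
        rw [batchStep, sub_sub_cancel_left, norm_neg, norm_smul, Real.norm_eq_abs,
          abs_of_nonneg (by positivity)]
    _ ≤ γ / #B * (#B * ((∑ j, -φ (p j w)) * K)) := by
        gcongr
        exact (norm_sum_le _ _).trans ((sum_le_card_nsmul _ _ _ hterm).trans_eq (nsmul_eq_mul _ _))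
    _ = γ * K * ∑ j, -φ (p j w) := by field_simp

theorem log_norm_batchStep_sub_le [Fintype ι] (hφ : ∀ q, 0 ≤ q → 1 / 2 * exp (-q) ≤ -φ q)
    (hL : 0 < L) (haw : ∀ i w, ⟪a i w, w⟫ = L * p i w)
    (hahom : ∀ i, ∀ c : ℝ, 0 < c → ∀ w, a i (c • w) = c ^ (L - 1) • a i w)
    {M : ℝ} (hM : ∀ i, ∀ u : E, ‖u‖ = 1 → ‖a i u‖ ≤ M) (hγ : 0 ≤ γ) (hB : B.Nonempty)
    (hw : w ≠ 0) (hp : ∀ i, 0 ≤ p i w) :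
    log ‖batchStep p a φ γ B w‖ - log ‖w‖ ≤ M * (γ * ‖w‖ ^ ((L : ℤ) - 2) * ∑ j, -φ (p j w)) := by
  have hw' : ‖w‖ ≠ 0 := norm_ne_zero_iff.2 hw
  have hpow : ‖w‖ ^ (L - 1) = ‖w‖ ^ ((L : ℤ) - 2) * ‖w‖ := by
    rw [← zpow_natCast, ← zpow_add_one₀ hw']
    congr 1
    omega
  calc log ‖batchStep p a φ γ B w‖ - log ‖w‖
      = log ‖w + (batchStep p a φ γ B w - w)‖ - log ‖w‖ := by rw [add_sub_cancel]
    _ ≤ ‖batchStep p a φ γ B w - w‖ / ‖w‖ :=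
        log_norm_add_sub_log_norm_le hw (inner_batchStep_sub_nonneg hφ haw hγ hp)
    _ ≤ γ * (M * ‖w‖ ^ (L - 1)) * (∑ j, -φ (p j w)) / ‖w‖ := by
        gcongr
        exact norm_sub_batchStep_le hφ hγ hB hp fun i =>
          norm_le_mul_norm_pow_of_homogeneous (hahom i) (hM i) hw
    _ = M * (γ * ‖w‖ ^ ((L : ℤ) - 2) * ∑ j, -φ (p j w)) := by
        rw [hpow]
        field_simp

end BatchStep

theorem stmt_13_general {d n L : ℕ} (hL : 0 < L)
    (p : Fin n → EuclideanSpace ℝ (Fin d) → ℝ)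
    (hplip : ∀ i, LocallyLipschitz (p i))
    (hphom : ∀ i, ∀ c : ℝ, 0 < c → ∀ w, p i (c • w) = c ^ L * p i w)
    (a : Fin n → EuclideanSpace ℝ (Fin d) → EuclideanSpace ℝ (Fin d))
    (haw : ∀ i w, ⟪a i w, w⟫ = (L : ℝ) * p i w)
    (hahom : ∀ i, ∀ c : ℝ, 0 < c → ∀ w, a i (c • w) = c ^ (L - 1) • a i w)
    (habd : ∀ i, ∃ M : ℝ, ∀ u : EuclideanSpace ℝ (Fin d), ‖u‖ = 1 → ‖a i u‖ ≤ M)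
    (l : ℝ → ℝ)
    (hl' : ∀ q : ℝ, 0 ≤ q →
      (1 / 2) * Real.exp (-q) ≤ -deriv l q ∧ -deriv l q ≤ Real.exp (-q))
    (γ : ℝ) (hγ : 0 < γ)
    (B : ℕ → Finset (Fin n)) (hB : ∀ k, (B k).Nonempty)
    (w : ℕ → EuclideanSpace ℝ (Fin d))
    (hw : ∀ k, w (k + 1) =
      w k - (γ / (B k).card) • ∑ i ∈ B k, deriv l (p i (w k)) • a i (w k))
    (ε : ℝ) (hε : 0 < ε) (k₀ : ℕ)
    (hlate : ∀ k ≥ k₀, w k ≠ 0 ∧ ε ≤ ⨅ i, p i ((‖w k‖)⁻¹ • w k))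
    (γbar : ℕ → ℝ)
    (hγbar : ∀ k, γbar k =
      γ * ‖w k‖ ^ ((L : ℤ) - 2) * ∑ j, -deriv l (p j (w k))) :
    Filter.Tendsto (fun N => ∑ k ∈ Finset.Ico k₀ N, γbar k)
      Filter.atTop Filter.atTop := by
  obtain ⟨i₀⟩ : Nonempty (Fin n) := ⟨(hB k₀).choose⟩
  obtain ⟨M, hM_pos, hM⟩ := exists_pos_forall_le_of_finite habd
  obtain ⟨C, hC⟩ := (isCompact_sphere (0 : EuclideanSpace ℝ (Fin d)) 1).bddAbove_image
    (hplip i₀).continuous.continuousOn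
  have hφ : ∀ q, 0 ≤ q → 1 / 2 * Real.exp (-q) ≤ -deriv l q := fun q hq => (hl' q hq).1
  have hw0 : ∀ k ≥ k₀, w k ≠ 0 := fun k hk => (hlate k hk).1
  have hp : ∀ k ≥ k₀, ∀ i, 0 ≤ p i (w k) := fun k hk i =>
    (by positivity : 0 ≤ ε * ‖w k‖ ^ L).trans <| mul_norm_pow_le_of_homogeneous (hphom i)
      (hw0 k hk) ((hlate k hk).2.trans (ciInf_le (Finite.bddBelow_range _) i))
  have hpC : ∀ k ≥ k₀, p i₀ (w k) ≤ C * ‖w k‖ ^ L := fun k hk =>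
    le_mul_norm_pow_of_homogeneous (hphom i₀)
      (fun u hu => hC ⟨u, mem_sphere_zero_iff_norm.2 hu, rfl⟩) (hw0 k hk)
  have hstep : ∀ k, w (k + 1) = batchStep p a (deriv l) γ (B k) (w k) := hw
  refine tendsto_sum_Ico_atTop_of_log_growth_le (N := fun k => ‖w k‖) (c := M⁻¹)
    (g := fun x => γ / 2 * x ^ ((L : ℤ) - 2) * Real.exp (-(C * x ^ L))) (inv_pos.2 hM_pos)
    (fun k hk => norm_pos_iff.2 (hw0 k hk))
    (fun k hk => hstep k ▸ norm_le_norm_batchStep hφ haw hγ.le (hp k hk))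
    ((continuousOn_const.mul (continuousOn_id.zpow₀ _ fun x hx => Or.inl (ne_of_gt hx))).mul
      (by fun_prop)) (fun x hx => by positivity) (fun k hk => ?_) (fun k hk => ?_)
  · have hexp := half_exp_le_sum_neg hφ (hp k hk) (hpC k hk)
    calc _ = γ * ‖w k‖ ^ ((L : ℤ) - 2) * (1 / 2 * Real.exp (-(C * ‖w k‖ ^ L))) := by ring
      _ ≤ γbar k := hγbar k ▸ mul_le_mul_of_nonneg_left hexp (by positivity)
  · rw [hγbar, inv_mul_le_iff₀ hM_pos, hstep]
    exact log_norm_batchStep_sub_le hφ hL haw hahom hM hγ.le (hB k) (hw0 k hk) (hp k hk)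

/-- The effective step sizes are not summable. -/
theorem stmt_13 {d n L : ℕ} (hd : 0 < d) (hn : 0 < n) (hL : 0 < L)
    (p : Fin n → EuclideanSpace ℝ (Fin d) → ℝ)
    (hplip : ∀ i, LocallyLipschitz (p i))
    (hphom : ∀ i, ∀ c : ℝ, 0 < c → ∀ w, p i (c • w) = c ^ L * p i w)
    (a : Fin n → EuclideanSpace ℝ (Fin d) → EuclideanSpace ℝ (Fin d))
    (haw : ∀ i w, ⟪a i w, w⟫ = (L : ℝ) * p i w)
    (hahom : ∀ i, ∀ c : ℝ, 0 < c → ∀ w, a i (c • w) = c ^ (L - 1) • a i w)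
    (habd : ∀ i, ∃ M : ℝ, ∀ u : EuclideanSpace ℝ (Fin d), ‖u‖ = 1 → ‖a i u‖ ≤ M)
    (l : ℝ → ℝ) (hl : Differentiable ℝ l)
    (hl' : ∀ q : ℝ, 0 ≤ q →
      (1 / 2) * Real.exp (-q) ≤ -deriv l q ∧ -deriv l q ≤ Real.exp (-q))
    (γ : ℝ) (hγ : 0 < γ)
    (B : ℕ → Finset (Fin n)) (hB : ∀ k, (B k).Nonempty)
    (w : ℕ → EuclideanSpace ℝ (Fin d))
    (hw : ∀ k, w (k + 1) =
      w k - (γ / (B k).card) • ∑ i ∈ B k, deriv l (p i (w k)) • a i (w k))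
    (ε : ℝ) (hε : 0 < ε) (k₀ : ℕ)
    (hlate : ∀ k ≥ k₀, w k ≠ 0 ∧ ε ≤ ⨅ i, p i ((‖w k‖)⁻¹ • w k))
    (γbar : ℕ → ℝ)
    (hγbar : ∀ k, γbar k =
      γ * ‖w k‖ ^ ((L : ℤ) - 2) * ∑ j, -deriv l (p j (w k))) :
    Filter.Tendsto (fun N => ∑ k ∈ Finset.Ico k₀ N, γbar k)
      Filter.atTop Filter.atTop :=
  stmt_13_general hL p hplip hphom a haw hahom habd l hl' γ hγ B hB w hw ε hε k₀ hlate γbar hγbar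
end

section
/- Let (w_k) be a sequence in ℝ^d \ {0} with ‖w_k‖ → +∞ such that the normalized directions u_k := w_k/‖w_k‖ converge to some u with ‖u‖ = 1. Fix an index i with p_i(u) > m(u). Then the softmax weight of the i-th sample vanishes: λ_{i,k} := e^{−p_i(w_k)} / Σ_{j=1}^n e^{−p_j(w_k)} → 0 as k → ∞. -/
/-- Softmax weights of non-margin-attaining samples vanish along the iterates. -/
theorem stmt_14 {d n L : ℕ} (hd : 0 < d) (hn : 0 < n) (hL : 0 < L)
    (p : Fin n → EuclideanSpace ℝ (Fin d) → ℝ)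
    (hpc : ∀ j, Continuous (p j))
    (hphom : ∀ j, ∀ c : ℝ, 0 < c → ∀ x, p j (c • x) = c ^ L * p j x)
    (w : ℕ → EuclideanSpace ℝ (Fin d)) (hw0 : ∀ k, w k ≠ 0)
    (hnorm : Filter.Tendsto (fun k => ‖w k‖) Filter.atTop Filter.atTop)
    (u : EuclideanSpace ℝ (Fin d)) (hu : ‖u‖ = 1)
    (huk : Filter.Tendsto (fun k => (‖w k‖)⁻¹ • w k) Filter.atTop (nhds u))
    (i : Fin n) (hi : (⨅ j, p j u) < p i u) :
    Filter.Tendsto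
      (fun k => Real.exp (-p i (w k)) / ∑ j, Real.exp (-p j (w k)))
      Filter.atTop (nhds 0) := by
  have hne : Nonempty (Fin n) := ⟨⟨0, hn⟩⟩
  obtain ⟨j₀, hj₀⟩ := Finite.exists_min (fun j => p j u)
  have hj₀i : p j₀ u < p i u := lt_of_le_of_lt (le_ciInf hj₀) hi
  have hden : ∀ k, 0 < ∑ j, Real.exp (-p j (w k)) := fun k =>
    Finset.sum_pos (fun j _ => Real.exp_pos _) Finset.univ_nonempty
  have hlow : ∀ k, 0 ≤ Real.exp (-p i (w k)) / ∑ j, Real.exp (-p j (w k)) :=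
    fun k => div_nonneg (Real.exp_pos _).le (hden k).le
  have hub : ∀ k, Real.exp (-p i (w k)) / ∑ j, Real.exp (-p j (w k)) ≤
      Real.exp (p j₀ (w k) - p i (w k)) := by
    intro k
    have h1 : Real.exp (-p j₀ (w k)) ≤ ∑ j, Real.exp (-p j (w k)) :=
      Finset.single_le_sum (f := fun j => Real.exp (-p j (w k))) (fun j _ => (Real.exp_pos _).le) (Finset.mem_univ j₀)
    have h2 : Real.exp (-p i (w k)) / ∑ j, Real.exp (-p j (w k)) ≤
        Real.exp (-p i (w k)) / Real.exp (-p j₀ (w k)) :=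
      div_le_div_of_nonneg_left (Real.exp_pos _).le (Real.exp_pos _) h1
    calc Real.exp (-p i (w k)) / ∑ j, Real.exp (-p j (w k))
        ≤ Real.exp (-p i (w k)) / Real.exp (-p j₀ (w k)) := h2
      _ = Real.exp (p j₀ (w k) - p i (w k)) := by
          rw [← Real.exp_sub]; ring_nf
  have hwpos : ∀ k, 0 < ‖w k‖ := fun k => norm_pos_iff.mpr (hw0 k)
  have hhom : ∀ j k, p j (w k) = ‖w k‖ ^ L * p j ((‖w k‖)⁻¹ • w k) := by
    intro j k
    have : w k = ‖w k‖ • ((‖w k‖)⁻¹ • w k) := by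
      rw [smul_inv_smul₀ (hwpos k).ne']
    conv_lhs => rw [this]
    exact hphom j _ (hwpos k) _
  have hkey : Filter.Tendsto (fun k => p j₀ (w k) - p i (w k)) Filter.atTop Filter.atBot := by
    have h1 : (fun k => p j₀ (w k) - p i (w k))
        = fun k => ‖w k‖ ^ L * (p j₀ ((‖w k‖)⁻¹ • w k) - p i ((‖w k‖)⁻¹ • w k)) := by
      funext k; rw [hhom j₀ k, hhom i k]; ring
    rw [h1]
    have hpow : Filter.Tendsto (fun k => ‖w k‖ ^ L) Filter.atTop Filter.atTop :=
      (Filter.tendsto_pow_atTop hL.ne').comp hnorm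
    have hg : Filter.Tendsto (fun k => p j₀ ((‖w k‖)⁻¹ • w k) - p i ((‖w k‖)⁻¹ • w k))
        Filter.atTop (nhds (p j₀ u - p i u)) :=
      (((hpc j₀).tendsto u).comp huk).sub (((hpc i).tendsto u).comp huk)
    exact Filter.Tendsto.atTop_mul_neg (sub_neg.mpr hj₀i) hpow hg
  have hupper : Filter.Tendsto (fun k => Real.exp (p j₀ (w k) - p i (w k)))
      Filter.atTop (nhds 0) := Real.tendsto_exp_atBot.comp hkey
  exact tendsto_of_tendsto_of_tendsto_of_le_of_le tendsto_const_nhds hupper hlow hub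
end

section
/- Let u* ∈ ℝ^d with ‖u*‖ = 1 be a local maximum of the margin m restricted to the unit sphere, i.e. there is a neighborhood U of u* in ℝ^d such that m(u) ≤ m(u*) for all u ∈ U with ‖u‖ = 1. Then there exist coefficients λ_1, …, λ_n ≥ 0 with Σ_{i=1}^n λ_i = 1 and λ_i = 0 whenever p_i(u*) ≠ m(u*), such that the vector v := Σ_{i=1}^n λ_i·∇p_i(u*) satisfies v − ⟨v, u*⟩·u* = 0 (i.e. v is parallel to u*). -/
/-!
If no convex combination of the tangential parts of the active gradients vanished, separating `0`
from their convex hull would give a tangent direction `w` at `u*` along which every active `p i`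
has positive derivative. Along the path `t ↦ (u* + t • w) / ‖u* + t • w‖` on the sphere the active
`p i` then increase for small `t > 0`, while the inactive ones stay above `m(u*)` by continuity,
so the margin rises strictly above `m(u*)` arbitrarily close to `u*`.
-/

open scoped RealInnerProductSpace
open Filter Topology

theorem eventually_lt_of_hasDerivAt_pos {f : ℝ → ℝ} {f' x : ℝ} (hf : HasDerivAt f f' x)
    (hf' : 0 < f') : ∀ᶠ t in 𝓝[>] x, f x < f t := by
  have hslope := (hasDerivAt_iff_tendsto_slope.1 hf).mono_left (nhdsGT_le_nhdsNE x)
  filter_upwards [hslope.eventually (eventually_gt_nhds hf'), self_mem_nhdsWithin]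
    with t hpos (hxt : x < t)
  rw [slope_def_field] at hpos
  exact sub_pos.1 ((div_pos_iff_of_pos_right (sub_pos.2 hxt)).1 hpos)

theorem eventually_iInf_lt_iInf {ι : Type*} [Finite ι] [Nonempty ι] {f : ι → ℝ → ℝ}
    {f' : ι → ℝ} {x : ℝ} (hf : ∀ i, HasDerivAt (f i) (f' i) x)
    (hpos : ∀ i, f i x = ⨅ j, f j x → 0 < f' i) :
    ∀ᶠ t in 𝓝[>] x, ⨅ i, f i x < ⨅ i, f i t := by
  have hlt : ∀ i, ∀ᶠ t in 𝓝[>] x, ⨅ j, f j x < f i t := by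
    intro i
    rcases (ciInf_le (Finite.bddBelow_range fun j => f j x) i).eq_or_lt with hi | hi
    · exact hi ▸ eventually_lt_of_hasDerivAt_pos (hf i) (hpos i hi.symm)
    · exact ((hf i).continuousAt.eventually (eventually_gt_nhds hi)).filter_mono
        nhdsWithin_le_nhds
  filter_upwards [eventually_all.2 hlt] with t ht
  obtain ⟨i, hi⟩ := exists_eq_ciInf_of_finite (f := fun j => f j t)
  exact hi ▸ ht i

section InnerProductSpace

variable {E : Type*} [NormedAddCommGroup E] [InnerProductSpace ℝ E]

theorem exists_sum_smul_eq_zero_or_exists_inner_pos [CompleteSpace E] {ι : Type*} [Fintype ι]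
    (v : ι → E) (s : Set ι) :
    (∃ lam : ι → ℝ, (∀ i, 0 ≤ lam i) ∧ ∑ i, lam i = 1 ∧ (∀ i ∉ s, lam i = 0) ∧
      ∑ i, lam i • v i = 0) ∨
    ∃ w : E, ∀ i ∈ s, 0 < ⟪v i, w⟫ := by
  classical
  set L := Fintype.linearCombination ℝ v
  have hL : L '' convexHull ℝ ((fun i => Pi.single i 1) '' s) = convexHull ℝ (v '' s) := by
    rw [LinearMap.image_convexHull, Set.image_image]
    simp [L, Fintype.linearCombination_apply_single]
  by_cases h0 : (0 : E) ∈ convexHull ℝ (v '' s)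
  · left
    rw [← hL] at h0
    obtain ⟨lam, hlam, hsum⟩ := h0
    have hsimplex : lam ∈ stdSimplex ℝ ι :=
      convexHull_min (by rintro _ ⟨i, -, rfl⟩; exact single_mem_stdSimplex ℝ i)
        (convex_stdSimplex ℝ ι) hlam
    have hsupp : lam ∈ {μ : ι → ℝ | ∀ i ∉ s, μ i = 0} := by
      refine convexHull_min ?_ ?_ hlam
      · rintro _ ⟨j, hj, rfl⟩ i hi
        exact Pi.single_eq_of_ne (by rintro rfl; exact hi hj) _
      · intro x hx y hy a b _ _ _ i hi
        simp [hx i hi, hy i hi]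
    exact ⟨lam, hsimplex.1, hsimplex.2, hsupp,
      by simpa [L, Fintype.linearCombination_apply] using hsum⟩
  · right
    have hfin : (v '' s).Finite := s.toFinite.image v
    obtain ⟨f, r, hf0, hf⟩ := geometric_hahn_banach_point_closed (convex_convexHull ℝ _)
      (hfin.isClosed_convexHull ℝ) h0
    refine ⟨(InnerProductSpace.toDual ℝ E).symm f, fun i hi => ?_⟩
    rw [real_inner_comm, InnerProductSpace.toDual_symm_apply]
    exact (map_zero f ▸ hf0).trans (hf _ (subset_convexHull ℝ _ ⟨i, hi, rfl⟩))

theorem hasDerivAt_inv_norm_smul_add_smul {u w : E} (hu : ‖u‖ = 1) (huw : ⟪u, w⟫ = 0) :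
    HasDerivAt (fun t : ℝ => ‖u + t • w‖⁻¹ • (u + t • w)) w 0 := by
  have hline : HasDerivAt (fun t : ℝ => u + t • w) w 0 := by
    simpa using ((hasDerivAt_id (0 : ℝ)).smul_const w).const_add u
  have hsq : HasDerivAt (fun t : ℝ => ‖u + t • w‖ ^ 2) 0 0 := by
    simpa [huw] using hline.norm_sq
  have hnorm : HasDerivAt (fun t : ℝ => ‖u + t • w‖) 0 0 := by
    simpa using hsq.sqrt (by simp [hu])
  have hinv : HasDerivAt (fun t : ℝ => ‖u + t • w‖⁻¹) 0 0 :=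
    (hnorm.inv (by simp [hu])).congr_deriv (by simp)
  exact (hinv.smul hline).congr_deriv (by simp [hu])

theorem norm_inv_norm_smul_add_smul {u w : E} (hu : u ≠ 0) (huw : ⟪u, w⟫ = 0) (t : ℝ) :
    ‖‖u + t • w‖⁻¹ • (u + t • w)‖ = 1 := by
  refine norm_smul_inv_norm fun h => hu ?_
  have : ⟪u, u + t • w⟫ = 0 := by rw [h, inner_zero_right]
  rwa [inner_add_right, real_inner_smul_right, huw, mul_zero, add_zero,
    inner_self_eq_zero] at this

theorem inner_sub_inner_smul_comm (u v w : E) :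
    ⟪v - ⟪v, u⟫ • u, w⟫ = ⟪v, w - ⟪w, u⟫ • u⟫ := by
  simp only [inner_sub_left, inner_sub_right, real_inner_smul_left, real_inner_smul_right,
    real_inner_comm u w]
  ring

theorem inner_sub_inner_smul_eq_zero {u : E} (hu : ‖u‖ = 1) (w : E) :
    ⟪u, w - ⟪w, u⟫ • u⟫ = 0 := by
  rw [inner_sub_right, real_inner_smul_right, real_inner_self_eq_norm_sq, hu, real_inner_comm]
  ring

theorem exists_norm_eq_one_iInf_lt [CompleteSpace E] {ι : Type*} [Finite ι] [Nonempty ι]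
    {p : ι → E → ℝ} {u w : E} (hp : ∀ i, DifferentiableAt ℝ (p i) u) (hu : ‖u‖ = 1)
    (huw : ⟪u, w⟫ = 0) (hpos : ∀ i, p i u = ⨅ j, p j u → 0 < ⟪gradient (p i) u, w⟫)
    {U : Set E} (hU : U ∈ 𝓝 u) : ∃ v ∈ U, ‖v‖ = 1 ∧ ⨅ i, p i u < ⨅ i, p i v := by
  set c : ℝ → E := fun t => ‖u + t • w‖⁻¹ • (u + t • w)
  have hc0 : c 0 = u := by simp [c, hu]
  have hc : HasDerivAt c w 0 := hasDerivAt_inv_norm_smul_add_smul hu huw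
  have hpc : ∀ i, HasDerivAt (fun t => p i (c t)) ⟪gradient (p i) u, w⟫ 0 := fun i =>
    (hp i).hasGradientAt.hasFDerivAt.comp_hasDerivAt_of_eq 0 hc hc0.symm
  have hmargin := eventually_iInf_lt_iInf hpc (by simpa only [hc0] using hpos)
  have hmem : ∀ᶠ t in 𝓝[>] 0, c t ∈ U :=
    hc.continuousAt.tendsto.mono_left nhdsWithin_le_nhds (hc0.symm ▸ hU)
  obtain ⟨t, hlt, ht⟩ := (hmargin.and hmem).exists
  exact ⟨c t, ht, norm_inv_norm_smul_add_smul (norm_ne_zero_iff.1 (hu ▸ one_ne_zero)) huw t,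
    by simpa only [hc0] using hlt⟩

end InnerProductSpace

theorem stmt_15_general {d n : ℕ} (hn : 0 < n)
    (p : Fin n → EuclideanSpace ℝ (Fin d) → ℝ)
    (hp : ∀ i, ContDiff ℝ 1 (p i))
    (ustar : EuclideanSpace ℝ (Fin d)) (hustar : ‖ustar‖ = 1)
    (hmax : ∃ U ∈ nhds ustar, ∀ u ∈ U, ‖u‖ = 1 → (⨅ i, p i u) ≤ ⨅ i, p i ustar) :
    ∃ lam : Fin n → ℝ, (∀ i, 0 ≤ lam i) ∧ ∑ i, lam i = 1 ∧
      (∀ i, p i ustar ≠ (⨅ j, p j ustar) → lam i = 0) ∧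
      (∑ i, lam i • gradient (p i) ustar) -
        ⟪∑ i, lam i • gradient (p i) ustar, ustar⟫ • ustar = 0 := by
  have : Nonempty (Fin n) := ⟨⟨0, hn⟩⟩
  obtain ⟨U, hU, hmax⟩ := hmax
  rcases exists_sum_smul_eq_zero_or_exists_inner_pos
      (fun i => gradient (p i) ustar - ⟪gradient (p i) ustar, ustar⟫ • ustar)
      {i | p i ustar = ⨅ j, p j ustar} with ⟨lam, hlam0, hlam1, hsupp, hsum⟩ | ⟨w, hw⟩
  · refine ⟨lam, hlam0, hlam1, hsupp, ?_⟩
    rw [← hsum]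
    simp only [smul_sub, Finset.sum_sub_distrib, sum_inner, real_inner_smul_left,
      Finset.sum_smul, smul_smul]
  · obtain ⟨v, hvU, hv, hlt⟩ := exists_norm_eq_one_iInf_lt
      (fun i => ((hp i).differentiable one_ne_zero).differentiableAt) hustar
      (inner_sub_inner_smul_eq_zero hustar w)
      (fun i hi => (hw i hi).trans_eq (inner_sub_inner_smul_comm ustar _ w)) hU
    exact absurd (hmax v hvU hv) hlt.not_ge

/-- A local maximum of the margin on the unit sphere is a critical point of the
margin restricted to the sphere. -/
theorem stmt_15 {d n : ℕ} (hd : 0 < d) (hn : 0 < n)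
    (p : Fin n → EuclideanSpace ℝ (Fin d) → ℝ)
    (hp : ∀ i, ContDiff ℝ 1 (p i))
    (ustar : EuclideanSpace ℝ (Fin d)) (hustar : ‖ustar‖ = 1)
    (hmax : ∃ U ∈ nhds ustar, ∀ u ∈ U, ‖u‖ = 1 → (⨅ i, p i u) ≤ ⨅ i, p i ustar) :
    ∃ lam : Fin n → ℝ, (∀ i, 0 ≤ lam i) ∧ ∑ i, lam i = 1 ∧
      (∀ i, p i ustar ≠ (⨅ j, p j ustar) → lam i = 0) ∧
      (∑ i, lam i • gradient (p i) ustar) -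
        ⟪∑ i, lam i • gradient (p i) ustar, ustar⟫ • ustar = 0 :=
  stmt_15_general hn p hp ustar hustar hmax
end

section
/- Let T > 0, let u : [0,T] → ℝ^d be continuously differentiable with ‖u(t)‖ = 1 for all t ∈ [0,T], and let v : [0,T] → ℝ^d be such that for every t ∈ [0,T], v(t) lies in the convex hull of {∇p_i(u(t)) : i active at u(t)} and u′(t) = v(t) − ⟨v(t), u(t)⟩·u(t). Then m(u(T)) − m(u(0)) = ∫₀ᵀ ‖u′(t)‖² dt; in particular the margin is nondecreasing along the curve: m(u(T)) ≥ m(u(0)). -/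
/-!
At each time `t` the margin `m t = ⨅ j, p j (u t)` is touched from above by `p i ∘ u` for every
active `i`, and that function has derivative `⟪∇p_i (u t), u' t⟫`. Since `u'` is the tangential
part of `v` and `‖u‖ = 1`, `⟪v, u'⟫ = ‖u'‖²`; as `v` lies in the hull of the active gradients,
some active `i` gives derivative `≤ ‖u'‖²` and some gives `≥ ‖u'‖²`. The first bounds the right
Dini derivative of `m` and yields `m T - m 0 ≤ ∫ ‖u'‖²`; the second, after reversing time, yields
the opposite inequality.
-/

open scoped RealInnerProductSpace

open Set Filter Topology

theorem eventually_slope_lt_of_le_of_hasDerivAt {f q : ℝ → ℝ} {q' x r : ℝ}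
    (hq : HasDerivAt q q' x) (hqx : q x = f x) (hfq : ∀ z, f z ≤ q z) (hr : q' < r) :
    ∀ᶠ z in 𝓝[>] x, slope f x z < r := by
  have hslope : ∀ᶠ z in 𝓝[>] x, slope q x z < r :=
    ((hasDerivAt_iff_tendsto_slope.1 hq).mono_left
      (nhdsWithin_mono x fun _ hz => ne_of_gt hz)).eventually_lt_const hr
  filter_upwards [hslope, self_mem_nhdsWithin] with z hz hxz
  refine lt_of_le_of_lt ?_ hz
  rw [slope_def_field, slope_def_field]
  exact div_le_div_of_nonneg_right (by linarith [hfq z]) (sub_nonneg.2 hxz.out.le)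

theorem sub_le_integral_of_frequently_slope_lt {f g : ℝ → ℝ} {a b : ℝ} (hab : a ≤ b)
    (hf : ContinuousOn f (Icc a b)) (hg : Continuous g)
    (hslope : ∀ x ∈ Ico a b, ∀ r, g x < r → ∃ᶠ z in 𝓝[>] x, slope f x z < r) :
    f b - f a ≤ ∫ t in a..b, g t := by
  have hε : ∀ ε > 0, f b - f a ≤ (∫ t in a..b, g t) + ε * (b - a) := by
    intro ε hε
    have hB : ∀ x, HasDerivAt (fun y => f a + (∫ t in a..y, g t) + ε * (y - a)) (g x + ε) x :=
      fun x => (((hg.integral_hasStrictDerivAt a x).hasDerivAt.const_add (f a)).add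
        (((hasDerivAt_id x).sub_const a).const_mul ε)).congr_deriv (by simp)
    have hfb := image_le_of_liminf_slope_right_lt_deriv_boundary hf hslope (by simp) hB
      (fun x _ _ => lt_add_of_pos_right _ hε) (right_mem_Icc.2 hab)
    linarith
  have hlim : Tendsto (fun ε => (∫ t in a..b, g t) + ε * (b - a)) (𝓝[>] 0)
      (𝓝 (∫ t in a..b, g t)) := by
    refine tendsto_nhdsWithin_of_tendsto_nhds ?_
    simpa using ((continuous_id.mul continuous_const).const_add _).tendsto' 0 _ (by simp)
  exact ge_of_tendsto hlim (eventually_nhdsWithin_of_forall hε)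

theorem sub_le_integral_of_forall_exists_le_hasDerivAt {f g : ℝ → ℝ} {a b : ℝ} (hab : a ≤ b)
    (hf : ContinuousOn f (Icc a b)) (hg : ContinuousOn g (Icc a b))
    (H : ∀ x ∈ Ico a b, ∃ q q', HasDerivAt q q' x ∧ q' ≤ g x ∧ q x = f x ∧ ∀ z, f z ≤ q z) :
    f b - f a ≤ ∫ t in a..b, g t := by
  set G := IccExtend hab ((Icc a b).domRestrict g)
  have hG : EqOn G g (Icc a b) := fun x hx => IccExtend_of_mem hab _ hx
  calc f b - f a ≤ ∫ t in a..b, G t := by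
        refine sub_le_integral_of_frequently_slope_lt hab hf
          (continuous_IccExtend_iff.2 hg.domRestrict) fun x hx r hr => ?_
        obtain ⟨q, q', hq, hq'g, hqx, hfq⟩ := H x hx
        rw [hG (Ico_subset_Icc_self hx)] at hr
        exact (eventually_slope_lt_of_le_of_hasDerivAt hq hqx hfq (hq'g.trans_lt hr)).frequently
    _ = ∫ t in a..b, g t := intervalIntegral.integral_congr (by rwa [uIcc_of_le hab])

theorem integral_le_sub_of_forall_exists_ge_hasDerivAt {f g : ℝ → ℝ} {a b : ℝ} (hab : a ≤ b)
    (hf : ContinuousOn f (Icc a b)) (hg : ContinuousOn g (Icc a b))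
    (H : ∀ x ∈ Ioc a b, ∃ q q', HasDerivAt q q' x ∧ g x ≤ q' ∧ q x = f x ∧ ∀ z, f z ≤ q z) :
    ∫ t in a..b, g t ≤ f b - f a := by
  have hneg : MapsTo Neg.neg (Icc (-b) (-a)) (Icc a b) := fun x hx =>
    ⟨by linarith [hx.2], by linarith [hx.1]⟩
  have hreflected := sub_le_integral_of_forall_exists_le_hasDerivAt (f := fun x => f (-x))
    (g := fun x => -g (-x)) (neg_le_neg hab) (hf.comp continuousOn_neg hneg)
    (hg.comp continuousOn_neg hneg).neg fun x hx => ?_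
  · simp only [neg_neg, intervalIntegral.integral_neg, intervalIntegral.integral_comp_neg]
      at hreflected
    linarith
  · obtain ⟨q, q', hq, hgq', hqx, hfq⟩ := H (-x) ⟨by linarith [hx.2], by linarith [hx.1]⟩
    exact ⟨fun z => q (-z), q' * -1, hq.comp x (hasDerivAt_neg' x), by linarith, hqx,
      fun z => hfq (-z)⟩

section InnerProductSpace

variable {E : Type*} [NormedAddCommGroup E] [InnerProductSpace ℝ E]

theorem exists_inner_le_of_mem_convexHull {S : Set E} {v : E} (hv : v ∈ convexHull ℝ S) (y : E) :
    ∃ w ∈ S, ⟪w, y⟫ ≤ ⟪v, y⟫ := by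
  simpa only [innerₛₗ_apply_apply, real_inner_comm y] using
    ((innerₛₗ ℝ y).concaveOn convex_univ).exists_le_of_mem_convexHull (subset_univ S) hv

theorem exists_le_inner_of_mem_convexHull {S : Set E} {v : E} (hv : v ∈ convexHull ℝ S) (y : E) :
    ∃ w ∈ S, ⟪v, y⟫ ≤ ⟪w, y⟫ := by
  simpa only [inner_neg_right, neg_le_neg_iff] using exists_inner_le_of_mem_convexHull hv (-y)

theorem real_inner_sub_inner_smul_eq_norm_sq {u : E} (hu : ‖u‖ = 1) (v : E) :
    ⟪v, v - ⟪v, u⟫ • u⟫ = ‖v - ⟪v, u⟫ • u‖ ^ 2 := by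
  have : ⟪⟪v, u⟫ • u, v - ⟪v, u⟫ • u⟫ = 0 := by
    rw [real_inner_smul_left, inner_sub_right, real_inner_smul_right, real_inner_self_eq_norm_sq,
      hu, real_inner_comm]
    ring
  rw [← real_inner_self_eq_norm_sq, inner_sub_left, this, sub_zero]

theorem HasGradientAt.comp_hasDerivAt [CompleteSpace E] {f : E → ℝ} {f' : E} {u : ℝ → E} {u' : E}
    {x : ℝ} (hf : HasGradientAt f f' (u x)) (hu : HasDerivAt u u' x) :
    HasDerivAt (fun t => f (u t)) ⟪f', u'⟫ x :=
  hf.hasFDerivAt.comp_hasDerivAt x hu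

end InnerProductSpace

theorem ContinuousOn.ciInf {ι α β : Type*} [Fintype ι] [Nonempty ι] [TopologicalSpace α]
    [ConditionallyCompleteLinearOrder β] [TopologicalSpace β] [OrderClosedTopology β]
    {f : ι → α → β} {s : Set α} (hf : ∀ i, ContinuousOn (f i) s) :
    ContinuousOn (fun x => ⨅ i, f i x) s := by
  simpa only [Finset.inf'_univ_eq_ciInf] using
    ContinuousOn.finset_inf'_apply Finset.univ_nonempty fun i _ => hf i

theorem stmt_16_general {d n : ℕ} (hn : 0 < n)
    (p : Fin n → EuclideanSpace ℝ (Fin d) → ℝ)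
    (hp : ∀ i, ContDiff ℝ 1 (p i))
    (T : ℝ) (hT : 0 < T)
    (u u' : ℝ → EuclideanSpace ℝ (Fin d))
    (hderiv : ∀ t ∈ Set.Icc (0 : ℝ) T, HasDerivAt u (u' t) t)
    (hcont : ContinuousOn u' (Set.Icc (0 : ℝ) T))
    (hsphere : ∀ t ∈ Set.Icc (0 : ℝ) T, ‖u t‖ = 1)
    (v : ℝ → EuclideanSpace ℝ (Fin d))
    (hv : ∀ t ∈ Set.Icc (0 : ℝ) T,
      v t ∈ convexHull ℝ
          {g | ∃ i, p i (u t) = (⨅ j, p j (u t)) ∧ g = gradient (p i) (u t)} ∧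
        u' t = v t - ⟪v t, u t⟫ • u t) :
    ((⨅ j, p j (u T)) - (⨅ j, p j (u 0)) = ∫ t in (0 : ℝ)..T, ‖u' t‖ ^ 2) ∧
      (⨅ j, p j (u 0)) ≤ ⨅ j, p j (u T) := by
  have : Nonempty (Fin n) := ⟨⟨0, hn⟩⟩
  have hmargin_cont : ContinuousOn (fun t => ⨅ j, p j (u t)) (Icc 0 T) :=
    ContinuousOn.ciInf fun i => (hp i).continuous.comp_continuousOn
      fun t ht => (hderiv t ht).continuousAt.continuousWithinAt
  have hsq_cont : ContinuousOn (fun t => ‖u' t‖ ^ 2) (Icc 0 T) := hcont.norm.pow 2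
  have hchain : ∀ t ∈ Icc 0 T, ∀ i,
      HasDerivAt (fun s => p i (u s)) ⟪gradient (p i) (u t), u' t⟫ t := fun t ht i =>
    (((hp i).differentiable one_ne_zero) (u t)).hasGradientAt.comp_hasDerivAt (hderiv t ht)
  have hflow : ∀ t ∈ Icc 0 T, ⟪v t, u' t⟫ = ‖u' t‖ ^ 2 := fun t ht => by
    rw [(hv t ht).2]; exact real_inner_sub_inner_smul_eq_norm_sq (hsphere t ht) (v t)
  have hmargin_le : ∀ s i, ⨅ j, p j (u s) ≤ p i (u s) :=
    fun s i => ciInf_le (finite_range _).bddBelow i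
  have hupper := sub_le_integral_of_forall_exists_le_hasDerivAt hT.le hmargin_cont hsq_cont
    fun t ht => by
      have ht : t ∈ Icc 0 T := Ico_subset_Icc_self ht
      obtain ⟨_, ⟨i, hi, rfl⟩, hle⟩ := exists_inner_le_of_mem_convexHull (hv t ht).1 (u' t)
      exact ⟨_, _, hchain t ht i, hle.trans_eq (hflow t ht), hi, fun s => hmargin_le s i⟩
  have hlower := integral_le_sub_of_forall_exists_ge_hasDerivAt hT.le hmargin_cont hsq_cont
    fun t ht => by
      have ht : t ∈ Icc 0 T := Ioc_subset_Icc_self ht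
      obtain ⟨_, ⟨i, hi, rfl⟩, hge⟩ := exists_le_inner_of_mem_convexHull (hv t ht).1 (u' t)
      exact ⟨_, _, hchain t ht i, (hflow t ht).symm.trans_le hge, hi, fun s => hmargin_le s i⟩
  have hnonneg : 0 ≤ ∫ t in (0 : ℝ)..T, ‖u' t‖ ^ 2 :=
    intervalIntegral.integral_nonneg hT.le fun t _ => sq_nonneg _
  exact ⟨le_antisymm hupper hlower, by linarith⟩

/-- Along a solution of the projected flow driven by convex combinations of the
active gradients, the margin increases with derivative ‖u′‖². -/
theorem stmt_16 {d n : ℕ} (hd : 0 < d) (hn : 0 < n)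
    (p : Fin n → EuclideanSpace ℝ (Fin d) → ℝ)
    (hp : ∀ i, ContDiff ℝ 1 (p i))
    (T : ℝ) (hT : 0 < T)
    (u u' : ℝ → EuclideanSpace ℝ (Fin d))
    (hderiv : ∀ t ∈ Set.Icc (0 : ℝ) T, HasDerivAt u (u' t) t)
    (hcont : ContinuousOn u' (Set.Icc (0 : ℝ) T))
    (hsphere : ∀ t ∈ Set.Icc (0 : ℝ) T, ‖u t‖ = 1)
    (v : ℝ → EuclideanSpace ℝ (Fin d))
    (hv : ∀ t ∈ Set.Icc (0 : ℝ) T,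
      v t ∈ convexHull ℝ
          {g | ∃ i, p i (u t) = (⨅ j, p j (u t)) ∧ g = gradient (p i) (u t)} ∧
        u' t = v t - ⟪v t, u t⟫ • u t) :
    ((⨅ j, p j (u T)) - (⨅ j, p j (u 0)) = ∫ t in (0 : ℝ)..T, ‖u' t‖ ^ 2) ∧
      (⨅ j, p j (u 0)) ≤ ⨅ j, p j (u T) :=
  stmt_16_general hn p hp T hT u u' hderiv hcont hsphere v hv
end

section
/- Suppose each p_i is additionally positively L-homogeneous for a positive integer L. Let u ∈ ℝ^d with ‖u‖ = 1 and m(u) > 0, and suppose there exist λ_1, …, λ_n ≥ 0 with Σλ_i = 1, λ_i = 0 whenever p_i(u) ≠ m(u), such that v := Σ_{i=1}^n λ_i·∇p_i(u) satisfies v − ⟨v,u⟩·u = 0. Then the rescaled point w := m(u)^{−1/L}·u is a KKT point of the problem min{‖w‖² : m(w) ≥ 1}: namely min_{1≤i≤n} p_i(w) = 1 and there exist α_1, …, α_n ≥ 0 with α_i·(p_i(w) − 1) = 0 for every i and w = Σ_{i=1}^n α_i·∇p_i(w). -/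
open scoped RealInnerProductSpace
open InnerProductSpace

/-!
Euler's identity `⟪∇pᵢ(u), u⟫ = L pᵢ(u)`, together with `λ` being supported on the indices
where `pᵢ(u) = m(u)`, turns the criticality condition into `∑ λᵢ ∇pᵢ(u) = L m(u) u`.
Gradients of `L`-homogeneous functions scale as `c ∇p(c x) = c^L ∇p(x)`, so at `w = c u` with
`c^L = m(u)⁻¹` the same combination of the `∇pᵢ(w)` is a positive multiple of `w`, which yields
the multipliers `αᵢ = c² λᵢ / L`; every index carrying weight has `pᵢ(w) = 1`.
-/

section Homogeneous

variable {E : Type*} [NormedAddCommGroup E] [InnerProductSpace ℝ E] [CompleteSpace E]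
  {f : E → ℝ} {L : ℕ}

theorem smul_gradient_smul_of_homogeneous {c : ℝ} (hf : ∀ x, f (c • x) = c ^ L * f x) (x : E) :
    c • gradient f (c • x) = c ^ L • gradient f x := by
  have hderiv : c • fderiv ℝ f (c • x) = c ^ L • fderiv ℝ f x := by
    rw [← fderiv_comp_smul, show (fun y => f (c • y)) = c ^ L • f from funext hf,
      fderiv_const_smul_field]
    rfl
  simp only [gradient, ← map_smul, hderiv]

theorem inner_gradient_self_of_homogeneous {x : E} (hf : DifferentiableAt ℝ f x)
    (hhom : ∀ c : ℝ, 0 < c → f (c • x) = c ^ L * f x) :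
    ⟪gradient f x, x⟫ = L * f x := by
  have hline : HasDerivAt (fun t : ℝ => t • x) x 1 := by
    simpa using (hasDerivAt_id (1 : ℝ)).smul_const x
  have hray : HasDerivAt (fun t : ℝ => f (t • x)) (fderiv ℝ f x x) 1 :=
    hf.hasFDerivAt.comp_hasDerivAt_of_eq 1 hline (one_smul ℝ x).symm
  have hpow : HasDerivAt (fun t : ℝ => f (t • x)) (L * f x) 1 := by
    refine HasDerivAt.congr_of_eventuallyEq ?_ ?_ (f := fun t : ℝ => t ^ L * f x)
    · simpa using (hasDerivAt_pow L (1 : ℝ)).mul_const (f x)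
    · filter_upwards [Ioi_mem_nhds one_pos] with t ht using hhom t ht
  rw [inner_gradient_left, hray.unique hpow]

theorem inner_sum_smul_gradient_of_homogeneous {ι : Type*} [Fintype ι] {p : ι → E → ℝ}
    {x : E} {m : ℝ} {lam : ι → ℝ} (hp : ∀ i, DifferentiableAt ℝ (p i) x)
    (hhom : ∀ i, ∀ c : ℝ, 0 < c → p i (c • x) = c ^ L * p i x) (hlam : ∑ i, lam i = 1)
    (hact : ∀ i, p i x ≠ m → lam i = 0) :
    ⟪∑ i, lam i • gradient (p i) x, x⟫ = L * m := by
  have hterm : ∀ i, lam i * (L * p i x) = L * m * lam i := fun i => by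
    by_cases h : p i x = m
    · rw [h]; ring
    · rw [hact i h]; ring
  simp only [sum_inner, real_inner_smul_left,
    fun i => inner_gradient_self_of_homogeneous (hp i) (hhom i), hterm, ← Finset.mul_sum, hlam,
    mul_one]

end Homogeneous

theorem Real.rpow_neg_one_div_natCast_pow {x : ℝ} (hx : 0 ≤ x) {n : ℕ} (hn : n ≠ 0) :
    (x ^ (-(1 : ℝ) / n)) ^ n = x⁻¹ := by
  rw [neg_div, Real.rpow_neg hx, inv_pow, one_div, Real.rpow_inv_natCast_pow hx hn]

theorem stmt_18_general {d n L : ℕ} (hn : 0 < n) (hL : 0 < L)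
    (p : Fin n → EuclideanSpace ℝ (Fin d) → ℝ)
    (hp : ∀ i, ContDiff ℝ 1 (p i))
    (hphom : ∀ i, ∀ c : ℝ, 0 < c → ∀ x, p i (c • x) = c ^ L * p i x)
    (u : EuclideanSpace ℝ (Fin d))
    (hm : 0 < ⨅ i, p i u)
    (lam : Fin n → ℝ) (hlam0 : ∀ i, 0 ≤ lam i) (hlam1 : ∑ i, lam i = 1)
    (hlamact : ∀ i, p i u ≠ (⨅ j, p j u) → lam i = 0)
    (hcrit : (∑ i, lam i • gradient (p i) u) -
      ⟪∑ i, lam i • gradient (p i) u, u⟫ • u = 0)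
    (w : EuclideanSpace ℝ (Fin d))
    (hw : w = ((⨅ j, p j u) ^ (-(1 : ℝ) / (L : ℝ))) • u) :
    (⨅ i, p i w) = 1 ∧
      ∃ α : Fin n → ℝ, (∀ i, 0 ≤ α i) ∧
        (∀ i, α i * (p i w - 1) = 0) ∧
        w = ∑ i, α i • gradient (p i) w := by
  have : Nonempty (Fin n) := Fin.pos_iff_nonempty.mp hn
  set m := ⨅ j, p j u
  set c := m ^ (-(1 : ℝ) / L)
  have hcpos : 0 < c := by positivity
  have hcL : c ^ L = m⁻¹ := Real.rpow_neg_one_div_natCast_pow hm.le hL.ne'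
  have hpw : ∀ i, p i w = m⁻¹ * p i u := fun i => by rw [hw, hphom i c hcpos, hcL]
  have hdiff : ∀ i, Differentiable ℝ (p i) := fun i => (hp i).differentiable one_ne_zero
  have hgrad : ∀ i, c • gradient (p i) w = m⁻¹ • gradient (p i) u := fun i => by
    rw [hw, smul_gradient_smul_of_homogeneous (hphom i c hcpos), hcL]
  have hcombo : ∑ i, lam i • gradient (p i) u = (L * m) • u := by
    rw [sub_eq_zero.mp hcrit, inner_sum_smul_gradient_of_homogeneous (fun i => hdiff i u)
      (fun i c hc => hphom i c hc u) hlam1 hlamact]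
  have hmargin : (⨅ i, p i w) = 1 := by
    simp only [hpw, ← Real.mul_iInf_of_nonneg (inv_nonneg.mpr hm.le)]
    exact inv_mul_cancel₀ hm.ne'
  refine ⟨hmargin, fun i => c ^ 2 / L * lam i, fun i => mul_nonneg (by positivity) (hlam0 i),
    fun i => ?_, ?_⟩
  · dsimp only
    by_cases h : p i u = m
    · rw [hpw, h, inv_mul_cancel₀ hm.ne', sub_self, mul_zero]
    · rw [hlamact i h, mul_zero, zero_mul]
  · calc w = (c / L * m⁻¹) • ∑ i, lam i • gradient (p i) u := by
          rw [hcombo, smul_smul, hw]; field_simp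
      _ = ∑ i, (c / L * lam i) • c • gradient (p i) w := by
          simp only [hgrad, Finset.smul_sum, smul_smul]
          congr! 2; ring
      _ = ∑ i, (c ^ 2 / L * lam i) • gradient (p i) w := by
          simp only [smul_smul]
          congr! 2; ring

/-- A critical direction of the margin on the sphere with positive margin
rescales to a KKT point of the max-margin problem (P). -/
theorem stmt_18 {d n L : ℕ} (hd : 0 < d) (hn : 0 < n) (hL : 0 < L)
    (p : Fin n → EuclideanSpace ℝ (Fin d) → ℝ)
    (hp : ∀ i, ContDiff ℝ 1 (p i))
    (hphom : ∀ i, ∀ c : ℝ, 0 < c → ∀ x, p i (c • x) = c ^ L * p i x)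
    (u : EuclideanSpace ℝ (Fin d)) (hu : ‖u‖ = 1)
    (hm : 0 < ⨅ i, p i u)
    (lam : Fin n → ℝ) (hlam0 : ∀ i, 0 ≤ lam i) (hlam1 : ∑ i, lam i = 1)
    (hlamact : ∀ i, p i u ≠ (⨅ j, p j u) → lam i = 0)
    (hcrit : (∑ i, lam i • gradient (p i) u) -
      ⟪∑ i, lam i • gradient (p i) u, u⟫ • u = 0)
    (w : EuclideanSpace ℝ (Fin d))
    (hw : w = ((⨅ j, p j u) ^ (-(1 : ℝ) / (L : ℝ))) • u) :
    (⨅ i, p i w) = 1 ∧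
      ∃ α : Fin n → ℝ, (∀ i, 0 ≤ α i) ∧
        (∀ i, α i * (p i w - 1) = 0) ∧
        w = ∑ i, α i • gradient (p i) w :=
  stmt_18_general hn hL p hp hphom u hm lam hlam0 hlam1 hlamact hcrit w hw
end
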